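/- arXiv:2007.07187 — 7 statements merged into one kernel-verified Lean document; each statement's English description precedes it below -/
import Mathlib

section
/- The endomorphism K satisfies K∘K = -id and N_K(a,b) := [Ka, Kb]▷ - K[Ka, b]▷ - K[a, Kb]▷ + K(K([a, b]▷)) = 0 for all a, b in g ⊕ g* if and only if the triple (J, R, σ) satisfies conditions (C0), (C1), (C2), (C3) and (C4). -/
/-!
`K` is additive and `N_K` is biadditive and skew-symmetric, so `N_K = 0` amounts to its vanishing
on the three kinds of pairs of generators `(u, 0)`, `(0, α)`. Componentwise, `K ∘ K = -id` is
(C0); its `g* → g*` block `σ R + J* J* = -id` is the transpose of `J J + R σ = -id`, because `R`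
and `σ` are skew. On `g* × g*` the two components of `N_K` are the Schouten bracket `[R, R]`
(whose vanishing is (C1)) and the defect of (C2); on `g × g` they are `N_J - R dσ` and the defect
of (C4). The mixed values `N_K((u, 0), (0, β))` vanish automatically once (C0), (C2) and (C3)
hold.
-/

open Module LinearMap

variable {g : Type*} [LieRing g] [LieAlgebra ℝ g]

/-- The coadjoint action: `(coad u α) v = -α ⁅u, v⁆`. -/
noncomputable def coad (u : g) (α : Module.Dual ℝ g) : Module.Dual ℝ g :=
  -(α ∘ₗ (LieAlgebra.ad ℝ g u : g →ₗ[ℝ] g))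

/-- The bracket `⁅u + α, v + β⁆▷ = ⁅u, v⁆ + ad*_u β - ad*_v α` on `g ⊕ g*`. -/
noncomputable def dbracket (a b : g × Module.Dual ℝ g) : g × Module.Dual ℝ g :=
  (⁅a.1, b.1⁆, coad a.1 b.2 - coad b.1 a.2)

/-- The neutral pairing `⟨u + α, v + β⟩ = (α v + β u)/2` on `g ⊕ g*`. -/
noncomputable def pairing (a b : g × Module.Dual ℝ g) : ℝ :=
  (a.2 b.1 + b.2 a.1) / 2

/-- `dτ(u,v,w) = -τ(⁅u,v⁆,w) + τ(⁅u,w⁆,v) - τ(⁅v,w⁆,u)`. -/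
noncomputable def dForm (τ : g → g → ℝ) (u v w : g) : ℝ :=
  -τ ⁅u, v⁆ w + τ ⁅u, w⁆ v - τ ⁅v, w⁆ u

/-- The linear functional `w ↦ dσ^b(u,v,w)`. -/
noncomputable def dSigma (σ : g →ₗ[ℝ] Module.Dual ℝ g) (u v : g) : Module.Dual ℝ g :=
  -σ ⁅u, v⁆ + (σ.flip v) ∘ₗ (LieAlgebra.ad ℝ g u : g →ₗ[ℝ] g)
    - (σ.flip u) ∘ₗ (LieAlgebra.ad ℝ g v : g →ₗ[ℝ] g)

/-- A generalized complex structure on a Lie algebra `g`. -/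
structure IsGCS (J : g →ₗ[ℝ] g) (R : Module.Dual ℝ g →ₗ[ℝ] g)
    (σ : g →ₗ[ℝ] Module.Dual ℝ g) : Prop where
  skewR : ∀ α β : Module.Dual ℝ g, α (R β) = -β (R α)
  skewσ : ∀ u v : g, σ u v = -σ v u
  c0a : J ∘ₗ J + R ∘ₗ σ = -LinearMap.id
  c0b : J ∘ₗ R = R ∘ₗ J.dualMap
  c0c : σ ∘ₗ J = J.dualMap ∘ₗ σ
  c1 : ∀ α β γ : Module.Dual ℝ g, α ⁅R β, R γ⁆ + β ⁅R γ, R α⁆ + γ ⁅R α, R β⁆ = 0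
  c2 : ∀ α β : Module.Dual ℝ g,
    J.dualMap (coad (R α) β - coad (R β) α)
      = coad (R α) (J.dualMap β) - coad (R β) (J.dualMap α)
  c3 : ∀ u v : g, ⁅J u, J v⁆ - J ⁅J u, v⁆ - J ⁅u, J v⁆ + J (J ⁅u, v⁆) = R (dSigma σ u v)
  c4 : ∀ u v w : g, dForm (fun a b => σ (J a) b) u v w =
    dForm (fun a b => σ a b) (J u) v w + dForm (fun a b => σ a b) u (J v) w +
      dForm (fun a b => σ a b) u v (J w)

/-- The endomorphism of `g ⊕ g*` associated to a triple `(J, R, σ)`. -/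
noncomputable def Kmap (J : g →ₗ[ℝ] g) (R : Module.Dual ℝ g →ₗ[ℝ] g)
    (σ : g →ₗ[ℝ] Module.Dual ℝ g) (a : g × Module.Dual ℝ g) : g × Module.Dual ℝ g :=
  (J a.1 + R a.2, σ a.1 - J.dualMap a.2)

/-- A generalized Kähler structure on a Lie algebra `g`. -/
structure IsGK (J₁ : g →ₗ[ℝ] g) (R₁ : Module.Dual ℝ g →ₗ[ℝ] g)
    (σ₁ : g →ₗ[ℝ] Module.Dual ℝ g) (J₂ : g →ₗ[ℝ] g) (R₂ : Module.Dual ℝ g →ₗ[ℝ] g)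
    (σ₂ : g →ₗ[ℝ] Module.Dual ℝ g) : Prop where
  gcs₁ : IsGCS J₁ R₁ σ₁
  gcs₂ : IsGCS J₂ R₂ σ₂
  comm : ∀ x : g × Module.Dual ℝ g,
    Kmap J₁ R₁ σ₁ (Kmap J₂ R₂ σ₂ x) = Kmap J₂ R₂ σ₂ (Kmap J₁ R₁ σ₁ x)
  symm : ∀ x y : g × Module.Dual ℝ g,
    pairing (Kmap J₁ R₁ σ₁ (Kmap J₂ R₂ σ₂ x)) y = pairing (Kmap J₁ R₁ σ₁ (Kmap J₂ R₂ σ₂ y)) x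
  posdef : ∀ x : g × Module.Dual ℝ g, x ≠ 0 → 0 < pairing (Kmap J₁ R₁ σ₁ (Kmap J₂ R₂ σ₂ x)) x

section Bracket

@[simp]
lemma coad_apply (u v : g) (α : Dual ℝ g) : coad u α v = -α ⁅u, v⁆ := rfl

lemma add_coad (u v : g) (α : Dual ℝ g) : coad (u + v) α = coad u α + coad v α := by
  ext w; simp [add_lie]; ring

lemma coad_add (u : g) (α β : Dual ℝ g) : coad u (α + β) = coad u α + coad u β := by
  ext w; simp; ring

@[simp]
lemma zero_coad (α : Dual ℝ g) : coad 0 α = 0 := by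
  ext; simp

@[simp]
lemma coad_zero (u : g) : coad u 0 = 0 := by
  ext; simp

@[simp]
lemma coad_neg (u : g) (α : Dual ℝ g) : coad u (-α) = -coad u α := by
  ext; simp

lemma dbracket_skew (a b : g × Dual ℝ g) : dbracket a b = -dbracket b a := by
  simp only [dbracket, Prod.neg_mk, ← lie_skew b.1 a.1, neg_neg, neg_sub]

lemma add_dbracket (a b c : g × Dual ℝ g) :
    dbracket (a + b) c = dbracket a c + dbracket b c := by
  simp only [dbracket, Prod.fst_add, Prod.snd_add, add_lie, add_coad, coad_add, Prod.mk_add_mk]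
  congr 1; abel

end Bracket

section Kmap

variable {J : g →ₗ[ℝ] g} {R : Dual ℝ g →ₗ[ℝ] g} {σ : g →ₗ[ℝ] Dual ℝ g}

lemma Kmap_add (a b : g × Dual ℝ g) : Kmap J R σ (a + b) = Kmap J R σ a + Kmap J R σ b := by
  simp only [Kmap, Prod.fst_add, Prod.snd_add, map_add, Prod.mk_add_mk]
  congr 1 <;> abel

lemma Kmap_neg (a : g × Dual ℝ g) : Kmap J R σ (-a) = -Kmap J R σ a := by
  simp only [Kmap, Prod.fst_neg, Prod.snd_neg, map_neg, Prod.neg_mk, neg_sub', neg_add]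

lemma sigma_R_add_dualMap_dualMap_eq_neg (hR : ∀ α β : Dual ℝ g, α (R β) = -β (R α))
    (hσ : ∀ u v : g, σ u v = -σ v u) (h : J ∘ₗ J + R ∘ₗ σ = -LinearMap.id) (φ : Dual ℝ g) :
    σ (R φ) + J.dualMap (J.dualMap φ) = -φ := by
  ext v
  have hv := congrArg φ (LinearMap.congr_fun h v)
  simp only [LinearMap.add_apply, comp_apply, map_add, LinearMap.neg_apply, id_apply,
    map_neg] at hv
  simp only [LinearMap.add_apply, LinearMap.neg_apply, dualMap_apply, hσ (R φ) v]
  linarith [hR φ (σ v)]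

lemma Kmap_Kmap_eq_neg_iff (hR : ∀ α β : Dual ℝ g, α (R β) = -β (R α))
    (hσ : ∀ u v : g, σ u v = -σ v u) :
    (∀ a, Kmap J R σ (Kmap J R σ a) = -a) ↔
      J ∘ₗ J + R ∘ₗ σ = -LinearMap.id ∧ J ∘ₗ R = R ∘ₗ J.dualMap ∧ σ ∘ₗ J = J.dualMap ∘ₗ σ := by
  simp only [Kmap, Prod.ext_iff, Prod.fst_neg, Prod.snd_neg, map_add, map_sub]
  constructor
  · intro h
    refine ⟨?_, ?_, ?_⟩ <;> refine LinearMap.ext fun x => ?_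
    · simpa using (h (x, 0)).1
    · simpa [add_neg_eq_zero] using (h (0, x)).1
    · simpa [sub_eq_zero] using (h (x, 0)).2
  · rintro ⟨hJJ, hJR, hσJ⟩ ⟨u, α⟩
    have hRR := sigma_R_add_dualMap_dualMap_eq_neg hR hσ hJJ α
    simp only [LinearMap.ext_iff, LinearMap.add_apply, LinearMap.neg_apply, comp_apply,
      id_apply] at hJJ hJR
    replace hσJ : σ (J u) = J.dualMap (σ u) := LinearMap.congr_fun hσJ u
    constructor
    · linear_combination (norm := module) hJJ u + hJR α
    · linear_combination (norm := module) hσJ + hRR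

end Kmap

section Nijenhuis

variable (J : g →ₗ[ℝ] g) (R : Dual ℝ g →ₗ[ℝ] g) (σ : g →ₗ[ℝ] Dual ℝ g)

noncomputable def nijenhuisK (a b : g × Dual ℝ g) : g × Dual ℝ g :=
  dbracket (Kmap J R σ a) (Kmap J R σ b) - Kmap J R σ (dbracket (Kmap J R σ a) b)
    - Kmap J R σ (dbracket a (Kmap J R σ b)) + Kmap J R σ (Kmap J R σ (dbracket a b))

variable {J R σ}

lemma nijenhuisK_skew (a b : g × Dual ℝ g) : nijenhuisK J R σ a b = -nijenhuisK J R σ b a := by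
  simp only [nijenhuisK, dbracket_skew a b, dbracket_skew (Kmap J R σ a), Kmap_neg,
    dbracket_skew a (Kmap J R σ b)]
  abel

lemma nijenhuisK_add_left (a b c : g × Dual ℝ g) :
    nijenhuisK J R σ (a + b) c = nijenhuisK J R σ a c + nijenhuisK J R σ b c := by
  simp only [nijenhuisK, Kmap_add, add_dbracket]
  abel

lemma nijenhuisK_add_right (a b c : g × Dual ℝ g) :
    nijenhuisK J R σ a (b + c) = nijenhuisK J R σ a b + nijenhuisK J R σ a c := by
  rw [nijenhuisK_skew, nijenhuisK_add_left, nijenhuisK_skew b, nijenhuisK_skew c, neg_add,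
    neg_neg, neg_neg]

lemma nijenhuisK_eq_zero_iff :
    (∀ a b, nijenhuisK J R σ a b = 0) ↔
      (∀ u v, nijenhuisK J R σ (u, 0) (v, 0) = 0) ∧ (∀ u β, nijenhuisK J R σ (u, 0) (0, β) = 0) ∧
        ∀ α β, nijenhuisK J R σ (0, α) (0, β) = 0 := by
  refine ⟨fun h => ⟨fun _ _ => h _ _, fun _ _ => h _ _, fun _ _ => h _ _⟩, ?_⟩
  rintro ⟨hll, hlr, hrr⟩ ⟨u, α⟩ ⟨v, β⟩
  have split : ∀ (x : g) (φ : Dual ℝ g), ((x, φ) : g × Dual ℝ g) = (x, 0) + (0, φ) := by simp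
  rw [split u, split v, nijenhuisK_add_left, nijenhuisK_add_right, nijenhuisK_add_right,
    nijenhuisK_skew (0, α) (v, 0), hll, hlr, hlr, hrr]
  simp

lemma nijenhuisK_inr_inr (α β : Dual ℝ g) :
    nijenhuisK J R σ (0, α) (0, β) =
      (⁅R α, R β⁆ - R (coad (R α) β - coad (R β) α),
        J.dualMap (coad (R α) β - coad (R β) α)
          - (coad (R α) (J.dualMap β) - coad (R β) (J.dualMap α))) := by
  simp only [nijenhuisK, Kmap, dbracket, map_zero, lie_zero, zero_lie, zero_coad, coad_neg,
    neg_zero, sub_zero, zero_sub, add_zero, zero_add, map_neg, map_sub, Prod.mk_sub_mk,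
    Prod.mk_add_mk]
  congr 1 <;> abel

lemma nijenhuisK_inr_inr_eq_zero_iff (hR : ∀ α β : Dual ℝ g, α (R β) = -β (R α))
    (α β : Dual ℝ g) :
    nijenhuisK J R σ (0, α) (0, β) = 0 ↔
      (∀ γ : Dual ℝ g, α ⁅R β, R γ⁆ + β ⁅R γ, R α⁆ + γ ⁅R α, R β⁆ = 0) ∧
        J.dualMap (coad (R α) β - coad (R β) α)
          = coad (R α) (J.dualMap β) - coad (R β) (J.dualMap α) := by
  have schouten (γ : Dual ℝ g) : γ (⁅R α, R β⁆ - R (coad (R α) β - coad (R β) α)) =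
      α ⁅R β, R γ⁆ + β ⁅R γ, R α⁆ + γ ⁅R α, R β⁆ := by
    rw [map_sub, hR, LinearMap.sub_apply, coad_apply, coad_apply, ← lie_skew (R γ) (R α)]
    simp only [map_neg]
    ring
  rw [nijenhuisK_inr_inr, Prod.mk_eq_zero, ← Module.forall_dual_apply_eq_zero_iff ℝ, sub_eq_zero]
  simp only [schouten]

lemma dSigma_eq (hσ : ∀ u v : g, σ u v = -σ v u) (u v : g) :
    dSigma σ u v = -σ ⁅u, v⁆ + coad u (σ v) - coad v (σ u) := by
  ext w
  simp [dSigma, hσ ⁅u, w⁆ v, hσ ⁅v, w⁆ u]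

lemma nijenhuisK_inl_inl_fst (hσ : ∀ u v : g, σ u v = -σ v u) (u v : g) :
    (nijenhuisK J R σ (u, 0) (v, 0)).1 =
      ⁅J u, J v⁆ - J ⁅J u, v⁆ - J ⁅u, J v⁆ + J (J ⁅u, v⁆) - R (dSigma σ u v) := by
  simp only [nijenhuisK, Kmap, dbracket, dSigma_eq hσ, map_zero, coad_zero, zero_sub, add_zero,
    map_neg, map_sub, map_add, Prod.fst_add, Prod.fst_sub]
  abel_nf

lemma nijenhuisK_inl_inl_snd_apply (hσ : ∀ u v : g, σ u v = -σ v u)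
    (hσJ : σ ∘ₗ J = J.dualMap ∘ₗ σ) (u v w : g) :
    (nijenhuisK J R σ (u, 0) (v, 0)).2 w =
      dForm (fun a b => σ a b) (J u) v w + dForm (fun a b => σ a b) u (J v) w +
        dForm (fun a b => σ a b) u v (J w) - dForm (fun a b => σ (J a) b) u v w := by
  have hJ (x y : g) : σ (J x) y = σ x (J y) := LinearMap.congr_fun (LinearMap.congr_fun hσJ x) y
  simp only [nijenhuisK, Kmap, dbracket, dForm, map_zero, coad_zero, zero_sub, add_zero,
    map_neg, Prod.snd_add, Prod.snd_sub, LinearMap.add_apply, LinearMap.sub_apply,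
    LinearMap.neg_apply, coad_apply, dualMap_apply, sub_zero]
  linarith [hJ ⁅u, w⁆ v, hJ ⁅v, w⁆ u, hσ ⁅J u, w⁆ v, hσ ⁅J v, w⁆ u, hσ ⁅u, J w⁆ v,
    hσ ⁅v, J w⁆ u]

lemma nijenhuisK_inl_inl_eq_zero_iff (hσ : ∀ u v : g, σ u v = -σ v u)
    (hσJ : σ ∘ₗ J = J.dualMap ∘ₗ σ) (u v : g) :
    nijenhuisK J R σ (u, 0) (v, 0) = 0 ↔
      ⁅J u, J v⁆ - J ⁅J u, v⁆ - J ⁅u, J v⁆ + J (J ⁅u, v⁆) = R (dSigma σ u v) ∧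
        ∀ w : g, dForm (fun a b => σ (J a) b) u v w =
          dForm (fun a b => σ a b) (J u) v w + dForm (fun a b => σ a b) u (J v) w +
            dForm (fun a b => σ a b) u v (J w) := by
  rw [Prod.ext_iff, Prod.fst_zero, Prod.snd_zero, nijenhuisK_inl_inl_fst hσ, sub_eq_zero,
    LinearMap.ext_iff]
  refine and_congr Iff.rfl (forall_congr' fun w => ?_)
  rw [nijenhuisK_inl_inl_snd_apply hσ hσJ, LinearMap.zero_apply, sub_eq_zero, eq_comm]

lemma nijenhuisK_inl_inr_eq_zero (hR : ∀ α β : Dual ℝ g, α (R β) = -β (R α))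
    (hσ : ∀ u v : g, σ u v = -σ v u) (hJJ : J ∘ₗ J + R ∘ₗ σ = -LinearMap.id)
    (hJR : J ∘ₗ R = R ∘ₗ J.dualMap)
    (hC2 : ∀ α β : Dual ℝ g, J.dualMap (coad (R α) β - coad (R β) α)
      = coad (R α) (J.dualMap β) - coad (R β) (J.dualMap α))
    (hC3 : ∀ u v : g,
      ⁅J u, J v⁆ - J ⁅J u, v⁆ - J ⁅u, J v⁆ + J (J ⁅u, v⁆) = R (dSigma σ u v))
    (u : g) (β : Dual ℝ g) : nijenhuisK J R σ (u, 0) (0, β) = 0 := by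
  have hRR := sigma_R_add_dualMap_dualMap_eq_neg hR hσ hJJ
  replace hJJ (x : g) : J (J x) + R (σ x) = -x := LinearMap.congr_fun hJJ x
  replace hJR (φ : Dual ℝ g) : J (R φ) = R (J.dualMap φ) := LinearMap.congr_fun hJR φ
  simp only [nijenhuisK, Kmap, dbracket, map_zero, lie_zero, coad_zero, zero_coad,
    coad_neg, sub_zero, zero_sub, add_zero, zero_add, map_neg, hJR,
    Prod.mk_sub_mk, Prod.mk_add_mk, Prod.mk_eq_zero]
  constructor
  -- once `J R = R J*` has cancelled the terms coming from `K ∘ K`, this is (C2) evaluated at `u`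
  · rw [← Module.forall_dual_apply_eq_zero_iff ℝ]
    intro γ
    have hc2 := LinearMap.congr_fun (hC2 γ β) u
    simp only [LinearMap.sub_apply, coad_apply, dualMap_apply] at hc2
    rw [← lie_skew (R γ) (J u), ← lie_skew (R β) (J u), ← lie_skew (R γ) u,
      ← lie_skew (R β) u] at hc2
    simp only [map_neg] at hc2
    simp only [map_add, map_sub, map_neg, hR γ, coad_apply, dualMap_apply]
    linarith
  -- (C3) paired with `β`, where `J J + R σ = -id` and its transpose absorb the remaining terms
  · ext w
    have h3 := congrArg β (hC3 u w)
    rw [hR β, dSigma_eq hσ] at h3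
    simp only [map_add, map_sub, LinearMap.add_apply, LinearMap.sub_apply, LinearMap.neg_apply,
      coad_apply] at h3
    have ha := congrArg β (hJJ ⁅u, w⁆)
    simp only [map_add, map_neg] at ha
    have hd := LinearMap.congr_fun (hRR (coad u β)) w
    simp only [LinearMap.add_apply, LinearMap.neg_apply, coad_apply, dualMap_apply] at hd
    simp only [LinearMap.add_apply, LinearMap.sub_apply, LinearMap.neg_apply, LinearMap.zero_apply,
      coad_apply, dualMap_apply]
    have hskew : σ u ⁅R β, w⁆ = -σ u ⁅w, R β⁆ := by rw [← lie_skew, map_neg]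
    linarith [hR β (σ ⁅u, w⁆), hσ ⁅u, R β⁆ w]

end Nijenhuis

/-- `K ∘ K = -id` and `N_K = 0` iff `(J, R, σ)` satisfies (C0)-(C4). -/
theorem Kmap_integrable_iff (J : g →ₗ[ℝ] g) (R : Module.Dual ℝ g →ₗ[ℝ] g)
    (σ : g →ₗ[ℝ] Module.Dual ℝ g)
    (hR : ∀ α β : Module.Dual ℝ g, α (R β) = -β (R α))
    (hσ : ∀ u v : g, σ u v = -σ v u) :
    ((∀ a : g × Module.Dual ℝ g, Kmap J R σ (Kmap J R σ a) = -a) ∧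
      (∀ a b : g × Module.Dual ℝ g,
        dbracket (Kmap J R σ a) (Kmap J R σ b)
          - Kmap J R σ (dbracket (Kmap J R σ a) b)
          - Kmap J R σ (dbracket a (Kmap J R σ b))
          + Kmap J R σ (Kmap J R σ (dbracket a b)) = 0)) ↔
    ((J ∘ₗ J + R ∘ₗ σ = -LinearMap.id) ∧ (J ∘ₗ R = R ∘ₗ J.dualMap) ∧
      (σ ∘ₗ J = J.dualMap ∘ₗ σ) ∧
      (∀ α β γ : Module.Dual ℝ g, α ⁅R β, R γ⁆ + β ⁅R γ, R α⁆ + γ ⁅R α, R β⁆ = 0) ∧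
      (∀ α β : Module.Dual ℝ g,
        J.dualMap (coad (R α) β - coad (R β) α)
          = coad (R α) (J.dualMap β) - coad (R β) (J.dualMap α)) ∧
      (∀ u v : g, ⁅J u, J v⁆ - J ⁅J u, v⁆ - J ⁅u, J v⁆ + J (J ⁅u, v⁆) = R (dSigma σ u v)) ∧
      (∀ u v w : g, dForm (fun a b => σ (J a) b) u v w =
        dForm (fun a b => σ a b) (J u) v w + dForm (fun a b => σ a b) u (J v) w +
          dForm (fun a b => σ a b) u v (J w))) := by
  rw [Kmap_Kmap_eq_neg_iff hR hσ]
  change _ ∧ (∀ a b, nijenhuisK J R σ a b = 0) ↔ _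
  rw [nijenhuisK_eq_zero_iff]
  constructor
  · rintro ⟨⟨hJJ, hJR, hσJ⟩, hll, -, hrr⟩
    have hrr' := fun α β => (nijenhuisK_inr_inr_eq_zero_iff hR α β).1 (hrr α β)
    have hll' := fun u v => (nijenhuisK_inl_inl_eq_zero_iff hσ hσJ u v).1 (hll u v)
    exact ⟨hJJ, hJR, hσJ, fun α β γ => (hrr' α β).1 γ, fun α β => (hrr' α β).2,
      fun u v => (hll' u v).1, fun u v => (hll' u v).2⟩
  · rintro ⟨hJJ, hJR, hσJ, hC1, hC2, hC3, hC4⟩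
    refine ⟨⟨hJJ, hJR, hσJ⟩, fun u v => ?_, nijenhuisK_inl_inr_eq_zero hR hσ hJJ hJR hC2 hC3,
      fun α β => ?_⟩
    · exact (nijenhuisK_inl_inl_eq_zero_iff hσ hσJ u v).2 ⟨hC3 u v, hC4 u v⟩
    · exact (nijenhuisK_inr_inr_eq_zero_iff hR α β).2 ⟨hC1 α β, hC2 α β⟩
end

section
/- Let g have dimension 4 and let (J, R, σ) be a generalized complex structure on g of type 1. Then there exists a real number λ such that J u = λ u for every u in the image of R. -/
open Module LinearMap

variable {g : Type*} [LieRing g] [LieAlgebra ℝ g]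

/-- on a 4-dimensional Lie algebra, a type-1 generalized complex structure
satisfies `J = λ id` on `Im R`. -/
theorem gcs_type1_J_scalar_on_range [FiniteDimensional ℝ g]
    (hdim : Module.finrank ℝ g = 4)
    (J : g →ₗ[ℝ] g) (R : Module.Dual ℝ g →ₗ[ℝ] g) (σ : g →ₗ[ℝ] Module.Dual ℝ g)
    (h : IsGCS J R σ) (htype : Module.finrank ℝ (LinearMap.range R) = 2) :
    ∃ lam : ℝ, ∀ u ∈ LinearMap.range R, J u = lam • u := by
  classical
  -- J maps range R into range R, and the symmetry identity
  have hJR : ∀ δ : Module.Dual ℝ g, J (R δ) = R (J.dualMap δ) := by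
    intro δ
    have := LinearMap.ext_iff.mp h.c0b δ
    simpa using this
  have sym : ∀ γ δ : Module.Dual ℝ g, γ (J (R δ)) = -δ (J (R γ)) := by
    intro γ δ
    rw [hJR δ, h.skewR _ _]
    simp [LinearMap.dualMap_apply]
  -- find α with R α ≠ 0
  have hRne : ∃ α : Module.Dual ℝ g, R α ≠ 0 := by
    by_contra hc
    push_neg at hc
    have : LinearMap.range R = ⊥ := by
      ext x; simp only [LinearMap.mem_range, Submodule.mem_bot]
      constructor
      · rintro ⟨α, rfl⟩; exact hc α
      · rintro rfl; exact ⟨0, map_zero R⟩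
    rw [this] at htype
    simp at htype
  obtain ⟨α, hα⟩ := hRne
  obtain ⟨φ, hφ⟩ : ∃ φ : Module.Dual ℝ g, φ (R α) ≠ 0 := by
    by_contra hc
    push_neg at hc
    exact hα ((Module.forall_dual_apply_eq_zero_iff ℝ (R α)).mp hc)
  set β : Module.Dual ℝ g := (φ (R α))⁻¹ • φ with hβdef
  have hβ : β (R α) = 1 := by
    simp [hβdef, inv_mul_cancel₀ hφ]
  set v₁ : g := R α with hv₁
  set v₂ : g := R β with hv₂
  have hαv₁ : α v₁ = 0 := by
    have := h.skewR α α; linarith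
  have hβv₂ : β v₂ = 0 := by
    have := h.skewR β β; linarith
  have hαv₂ : α v₂ = -1 := by
    have := h.skewR α β; rw [hβ] at this; linarith
  -- linear independence
  have hind : LinearIndependent ℝ ![v₁, v₂] := by
    rw [LinearIndependent.pair_iff]
    intro s t hst
    have h1 : β (s • v₁ + t • v₂) = 0 := by rw [hst]; simp
    have h2 : α (s • v₁ + t • v₂) = 0 := by rw [hst]; simp
    simp only [map_add, map_smul, hβ, hβv₂, hαv₁, hαv₂, smul_eq_mul, mul_one, mul_zero,
      mul_neg_one] at h1 h2
    constructor <;> linarith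
  -- span {v₁, v₂} = range R
  have hle : Submodule.span ℝ {v₁, v₂} ≤ LinearMap.range R := by
    rw [Submodule.span_le]
    rintro x hx
    rcases hx with rfl | rfl
    · exact ⟨α, rfl⟩
    · exact ⟨β, rfl⟩
  have hfr : Module.finrank ℝ (Submodule.span ℝ {v₁, v₂}) = 2 := by
    have : Submodule.span ℝ {v₁, v₂} = Submodule.span ℝ (Set.range ![v₁, v₂]) := by
      congr 1
      simp [Matrix.range_cons, Matrix.range_empty, Set.insert_comm]
      exact Set.pair_comm _ _
    rw [this, finrank_span_eq_card hind]
    simp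
  have hspan : Submodule.span ℝ {v₁, v₂} = LinearMap.range R := by
    apply Submodule.eq_of_le_of_finrank_le hle
    rw [hfr, htype]
  -- J v₁, J v₂ in span
  have hJv₁mem : J v₁ ∈ Submodule.span ℝ {v₁, v₂} := by
    rw [hspan, hv₁, hJR]; exact ⟨_, rfl⟩
  have hJv₂mem : J v₂ ∈ Submodule.span ℝ {v₁, v₂} := by
    rw [hspan, hv₂, hJR]; exact ⟨_, rfl⟩
  obtain ⟨a, b, hab⟩ := Submodule.mem_span_pair.mp hJv₁mem
  obtain ⟨c, d, hcd⟩ := Submodule.mem_span_pair.mp hJv₂mem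
  -- evaluate functionals
  have e1 : α (J v₁) = 0 := by have := sym α α; linarith
  have e2 : β (J v₂) = 0 := by have := sym β β; linarith
  have e3 : β (J v₁) = -α (J v₂) := sym β α
  have hb0 : b = 0 := by
    have := e1
    rw [← hab] at this
    simp only [map_add, map_smul, hαv₁, hαv₂, smul_eq_mul, mul_zero, mul_neg_one] at this
    linarith
  have hc0 : c = 0 := by
    have := e2
    rw [← hcd] at this
    simp only [map_add, map_smul, hβ, hβv₂, smul_eq_mul, mul_one, mul_zero] at this
    linarith
  have had : a = d := by
    have := e3
    rw [← hab, ← hcd] at this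
    simp only [map_add, map_smul, hβ, hβv₂, hαv₁, hαv₂, smul_eq_mul, mul_one, mul_zero,
      mul_neg_one] at this
    linarith
  have hJ1 : J v₁ = a • v₁ := by rw [← hab, hb0]; simp
  have hJ2 : J v₂ = a • v₂ := by rw [← hcd, hc0, ← had]; simp
  refine ⟨a, fun u hu => ?_⟩
  rw [← hspan] at hu
  obtain ⟨s, t, hst⟩ := Submodule.mem_span_pair.mp hu
  rw [← hst]
  simp only [map_add, map_smul, hJ1, hJ2, smul_add, smul_smul, mul_comm]
end

section
/- Let g have dimension 4 and let (J, R, σ) be a generalized complex structure on g of type 1. Then g is the internal direct sum of the subspaces Im R and ker σ, dim(ker σ) = 2, the subspace ker σ is invariant under J and J∘J = -id on ker σ, and the restriction of σ to Im R is injective. -/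
set_option maxHeartbeats 1000000


open Module LinearMap

variable {g : Type*} [LieRing g] [LieAlgebra ℝ g]

/-- Auxiliary: if `w` satisfies `J (J w) = -w` while `J` acts with factor `m ≠ 0`
on the independent pair `a, b`, then `σ w = 0`. -/
theorem gcs_aux_sigma_zero [FiniteDimensional ℝ g]
    (hdim : Module.finrank ℝ g = 4)
    (J : g →ₗ[ℝ] g) (σ : g →ₗ[ℝ] Module.Dual ℝ g)
    (skewσ : ∀ u v : g, σ u v = -σ v u)
    (hσJ : ∀ u v : g, σ (J u) v = σ u (J v))
    (a b w : g) (m : ℝ) (hm : m ≠ 0)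
    (hab : ∀ s t : ℝ, s • a + t • b = 0 → s = 0 ∧ t = 0)
    (haa : a + J (J a) = m • a) (hbb : b + J (J b) = m • b)
    (hJJw : J (J w) = -w) : σ w = 0 := by
  classical
  have hsmul : ∀ (t : ℝ) (x : g), t ≠ 0 → t • x = 0 → x = 0 := by
    intro t x ht hx
    have h1 := congrArg (fun y : g => t⁻¹ • y) hx
    simpa [smul_smul, inv_mul_cancel₀ ht] using h1
  by_cases hw0 : w = 0
  · rw [hw0, map_zero]
  have hJJJw : J (J (J w)) = -(J w) := by
    have h1 := congrArg J hJJw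
    rw [map_neg] at h1
    exact h1
  -- the four vectors a, b, w, J w are linearly independent
  have hli4 : LinearIndependent ℝ ![a, b, w, J w] := by
    rw [Fintype.linearIndependent_iff]
    intro c hc
    rw [Fin.sum_univ_four] at hc
    simp only [Matrix.cons_val_zero, Matrix.cons_val_one, Matrix.head_cons,
      Matrix.cons_val_two, Matrix.tail_cons, Matrix.cons_val_three] at hc
    have hA := congrArg (fun u : g => u + J (J u)) hc
    simp only [map_add, map_smul, smul_add, map_zero, add_zero, zero_add] at hA
    rw [hJJJw, hJJw] at hA
    have hA2 : (c 0 * m) • a + (c 1 * m) • b = 0 := by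
      have h3 : c 0 • (a + J (J a)) + c 1 • (b + J (J b)) = 0 := by
        rw [← hA]; module
      rw [haa, hbb] at h3
      rw [← h3]; module
    obtain ⟨h0, h1⟩ := hab _ _ hA2
    have hc0 : c 0 = 0 := (mul_eq_zero.mp h0).resolve_right hm
    have hc1 : c 1 = 0 := (mul_eq_zero.mp h1).resolve_right hm
    have hcw : c 2 • w + c 3 • J w = 0 := by
      rw [hc0, hc1] at hc
      rw [← hc]; module
    have hcw2 : c 2 • J w + c 3 • (-w) = 0 := by
      have h4 := congrArg J hcw
      simp only [map_add, map_smul, map_zero, hJJw, smul_neg] at h4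
      rw [← h4]; module
    have hsq : (c 2 ^ 2 + c 3 ^ 2) • w
        = c 2 • (c 2 • w + c 3 • J w) - c 3 • (c 2 • J w + c 3 • (-w)) := by
      module
    rw [hcw, hcw2] at hsq
    simp only [smul_zero, sub_zero] at hsq
    have hc23 : c 2 ^ 2 + c 3 ^ 2 = 0 := by
      by_contra hne
      exact hw0 (hsmul _ w hne hsq)
    have hc2 : c 2 = 0 := by nlinarith [sq_nonneg (c 2), sq_nonneg (c 3)]
    have hc3 : c 3 = 0 := by nlinarith [sq_nonneg (c 2), sq_nonneg (c 3)]
    intro i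
    fin_cases i <;> assumption
  have hspan4 : Submodule.span ℝ (Set.range ![a, b, w, J w]) = ⊤ :=
    hli4.span_eq_top_of_card_eq_finrank (by simp [hdim])
  -- σ w vanishes on the generators
  have hwa : σ w a = 0 := by
    have e1 : σ w (J (J a)) = -(σ w a) := by
      rw [← hσJ w (J a), ← hσJ (J w) a, hJJw]
      rw [map_neg, LinearMap.neg_apply]
    have e2 : σ w (m • a) = σ w a + σ w (J (J a)) := by
      rw [← haa, map_add]
    rw [map_smul, e1] at e2
    have e3 : m * σ w a = 0 := by
      have := e2
      simp only [smul_eq_mul] at this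
      linarith
    exact (mul_eq_zero.mp e3).resolve_left hm
  have hwb : σ w b = 0 := by
    have e1 : σ w (J (J b)) = -(σ w b) := by
      rw [← hσJ w (J b), ← hσJ (J w) b, hJJw]
      rw [map_neg, LinearMap.neg_apply]
    have e2 : σ w (m • b) = σ w b + σ w (J (J b)) := by
      rw [← hbb, map_add]
    rw [map_smul, e1] at e2
    have e3 : m * σ w b = 0 := by
      have := e2
      simp only [smul_eq_mul] at this
      linarith
    exact (mul_eq_zero.mp e3).resolve_left hm
  have hww : σ w w = 0 := by
    have := skewσ w w; linarith
  have hwJw : σ w (J w) = 0 := by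
    have e1 := hσJ w w
    have e2 := skewσ (J w) w
    rw [e1] at e2
    linarith
  -- conclude σ w = 0
  ext v
  have hv : v ∈ Submodule.span ℝ (Set.range ![a, b, w, J w]) := by
    rw [hspan4]; trivial
  induction hv using Submodule.span_induction with
  | mem x hx =>
    obtain ⟨i, rfl⟩ := hx
    fin_cases i
    · exact hwa
    · exact hwb
    · exact hww
    · exact hwJw
  | zero => simp
  | add x y _ _ hx hy => rw [map_add, hx, hy]; simp
  | smul t x _ hx => rw [map_smul, hx]; simp

/-- decomposition `g = Im R ⊕ ker σ` for a type-1 generalized complex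
structure in dimension 4. -/
theorem gcs_type1_decomposition [FiniteDimensional ℝ g]
    (hdim : Module.finrank ℝ g = 4)
    (J : g →ₗ[ℝ] g) (R : Module.Dual ℝ g →ₗ[ℝ] g) (σ : g →ₗ[ℝ] Module.Dual ℝ g)
    (h : IsGCS J R σ) (htype : Module.finrank ℝ (LinearMap.range R) = 2) :
    IsCompl (LinearMap.range R) (LinearMap.ker σ) ∧
    Module.finrank ℝ (LinearMap.ker σ) = 2 ∧
    (∀ u ∈ LinearMap.ker σ, J u ∈ LinearMap.ker σ) ∧
    (∀ u ∈ LinearMap.ker σ, J (J u) = -u) ∧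
    Set.InjOn (⇑σ) (LinearMap.range R : Set g) := by
  
  classical
  obtain ⟨skewR, skewσ, c0a, c0b, c0c, -, -, -, -⟩ := h
  have hsmul : ∀ (t : ℝ) (x : g), t ≠ 0 → t • x = 0 → x = 0 := by
    intro t x ht hx
    have h1 := congrArg (fun y : g => t⁻¹ • y) hx
    simpa [smul_smul, inv_mul_cancel₀ ht] using h1
  -- pointwise consequences of C0
  have hc0a : ∀ u : g, J (J u) + R (σ u) = -u := by
    intro u
    simpa [LinearMap.add_apply, LinearMap.comp_apply] using DFunLike.congr_fun c0a u
  have hc0b : ∀ α : Module.Dual ℝ g, J (R α) = R (J.dualMap α) := by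
    intro α
    simpa [LinearMap.comp_apply] using DFunLike.congr_fun c0b α
  have hσJ : ∀ u v : g, σ (J u) v = σ u (J v) := by
    intro u v
    have h1 : σ (J u) = J.dualMap (σ u) := by
      simpa [LinearMap.comp_apply] using DFunLike.congr_fun c0c u
    rw [h1]; rfl
  -- skewness of J ∘ R
  have hskewJR : ∀ α β : Module.Dual ℝ g, α (J (R β)) = -(β (J (R α))) := by
    intro α β
    rw [hc0b β, skewR α (J.dualMap β), LinearMap.dualMap_apply]
  -- pick a = R α₀ ≠ 0
  have hRne : ∃ α₀, R α₀ ≠ 0 := by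
    by_contra hcon
    push_neg at hcon
    have hR0 : R = 0 := LinearMap.ext fun α => hcon α
    rw [hR0, LinearMap.range_zero, finrank_bot] at htype
    norm_num at htype
  obtain ⟨α₀, ha0'⟩ := hRne
  obtain ⟨a, ha_def⟩ : ∃ a : g, a = R α₀ := ⟨_, rfl⟩
  have ha0 : a ≠ 0 := ha_def ▸ ha0'
  -- pick β₀ with β₀ a = 1
  have hφ : ∃ φ : Module.Dual ℝ g, φ a ≠ 0 := by
    by_contra hcon
    push_neg at hcon
    exact ha0 ((Module.forall_dual_apply_eq_zero_iff ℝ a).mp hcon)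
  obtain ⟨φ, hφ⟩ := hφ
  obtain ⟨β₀, hβ₀def⟩ : ∃ β₀ : Module.Dual ℝ g, β₀ = (φ a)⁻¹ • φ := ⟨_, rfl⟩
  have hβ₀a : β₀ a = 1 := by
    rw [hβ₀def]
    simp only [LinearMap.smul_apply, smul_eq_mul]
    exact inv_mul_cancel₀ hφ
  obtain ⟨b, hb_def⟩ : ∃ b : g, b = R β₀ := ⟨_, rfl⟩
  -- evaluation facts
  have hαa : α₀ a = 0 := by
    have h1 := skewR α₀ α₀
    rw [← ha_def] at h1
    linarith
  have hβb : β₀ b = 0 := by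
    have h1 := skewR β₀ β₀
    rw [← hb_def] at h1
    linarith
  have hαb : α₀ b = -1 := by
    have h1 := skewR α₀ β₀
    rw [← ha_def, ← hb_def] at h1
    rw [h1, hβ₀a]
  -- a, b linearly independent
  have hab : ∀ s t : ℝ, s • a + t • b = 0 → s = 0 ∧ t = 0 := by
    intro s t hst
    have h1 : s = 0 := by
      have h2 := congrArg β₀ hst
      rw [map_add, map_smul, map_smul, smul_eq_mul, smul_eq_mul, hβ₀a, hβb, map_zero] at h2
      linarith
    refine ⟨h1, ?_⟩
    have h2 := congrArg α₀ hst
    rw [map_add, map_smul, map_smul, smul_eq_mul, smul_eq_mul, hαa, hαb, map_zero, h1] at h2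
    linarith
  have hli : LinearIndependent ℝ ![a, b] := LinearIndependent.pair_iff.mpr hab
  -- span {a, b} = range R
  have hrange_ab : Set.range ![a, b] = {a, b} := by
    ext x
    simp [Fin.exists_fin_two, or_comm]
  have hspan : Submodule.span ℝ {a, b} = LinearMap.range R := by
    apply Submodule.eq_of_le_of_finrank_le
    · rw [Submodule.span_le]
      rintro x hx
      rcases hx with rfl | rfl
      · exact ⟨α₀, ha_def.symm⟩
      · exact ⟨β₀, hb_def.symm⟩
    · rw [htype, ← hrange_ab, finrank_span_eq_card hli]
      simp
  -- J preserves range R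
  have hJmem : ∀ v, v ∈ LinearMap.range R → J v ∈ LinearMap.range R := by
    rintro v ⟨α, rfl⟩
    exact ⟨J.dualMap α, (hc0b α).symm⟩
  obtain ⟨p, q, hpq⟩ := Submodule.mem_span_pair.mp
    (hspan ▸ hJmem a ⟨α₀, ha_def.symm⟩)
  obtain ⟨r, s, hrs⟩ := Submodule.mem_span_pair.mp
    (hspan ▸ hJmem b ⟨β₀, hb_def.symm⟩)
  -- compute coefficients
  have hαJa : α₀ (J a) = 0 := by
    have h1 := hskewJR α₀ α₀
    rw [← ha_def] at h1
    linarith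
  have hβJb : β₀ (J b) = 0 := by
    have h1 := hskewJR β₀ β₀
    rw [← hb_def] at h1
    linarith
  have hαJbβJa : α₀ (J b) = -(β₀ (J a)) := by
    have h1 := hskewJR α₀ β₀
    rw [← ha_def, ← hb_def] at h1
    exact h1
  have hq : q = 0 := by
    have h1 := congrArg α₀ hpq
    rw [map_add, map_smul, map_smul, smul_eq_mul, smul_eq_mul, hαa, hαb, hαJa] at h1
    linarith
  have hr : r = 0 := by
    have h1 := congrArg β₀ hrs
    rw [map_add, map_smul, map_smul, smul_eq_mul, smul_eq_mul, hβ₀a, hβb, hβJb] at h1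
    linarith
  have hsp : s = p := by
    have h1 := congrArg α₀ hrs
    have h2 := congrArg β₀ hpq
    rw [map_add, map_smul, map_smul, smul_eq_mul, smul_eq_mul, hαa, hαb] at h1
    rw [map_add, map_smul, map_smul, smul_eq_mul, smul_eq_mul, hβ₀a, hβb] at h2
    rw [hαJbβJa, ← h2] at h1
    linarith
  have hJa : J a = p • a := by rw [← hpq, hq]; simp
  have hJb : J b = p • b := by rw [← hrs, hr, hsp]; simp
  -- J acts as p on range R
  have hJV : ∀ v ∈ LinearMap.range R, J v = p • v := by
    intro v hv
    obtain ⟨x, y, hxy⟩ := Submodule.mem_span_pair.mp (hspan ▸ hv)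
    rw [← hxy]
    rw [map_add, map_smul, map_smul, hJa, hJb]
    module
  obtain ⟨m, hm_def⟩ : ∃ m : ℝ, m = 1 + p ^ 2 := ⟨_, rfl⟩
  have hm : m ≠ 0 := by rw [hm_def]; positivity
  have hJJV : ∀ v ∈ LinearMap.range R, J (J v) = (p ^ 2) • v := by
    intro v hv
    rw [hJV v hv, map_smul, hJV v hv, smul_smul, ← pow_two]
  have hRσV : ∀ v ∈ LinearMap.range R, R (σ v) = -(m • v) := by
    intro v hv
    have h1 := hc0a v
    rw [hJJV v hv] at h1
    have h2 : R (σ v) = -v - (p ^ 2) • v := by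
      rw [← h1]; module
    rw [h2, hm_def]
    module
  -- disjointness
  have hdisj : ∀ v, v ∈ LinearMap.range R → σ v = 0 → v = 0 := by
    intro v hv hσv
    have h1 := hRσV v hv
    rw [hσv, map_zero] at h1
    have h2 : m • v = 0 := by rw [← neg_eq_zero, ← h1]
    exact hsmul m v hm h2
  have hNJJ : ∀ w : g, R (σ w) = 0 → J (J w) = -w := by
    intro w hw
    have h1 := hc0a w
    rw [hw, add_zero] at h1
    exact h1
  have haa : a + J (J a) = m • a := by
    rw [hJJV a ⟨α₀, ha_def.symm⟩, hm_def]; module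
  have hbb : b + J (J b) = m • b := by
    rw [hJJV b ⟨β₀, hb_def.symm⟩, hm_def]; module
  -- key step: ker (R∘σ) ⊆ ker σ
  have hNker : ∀ w : g, R (σ w) = 0 → σ w = 0 := by
    intro w hw
    exact gcs_aux_sigma_zero hdim J σ skewσ hσJ a b w m hm hab haa hbb (hNJJ w hw)
  -- ker σ = ker (R ∘ₗ σ)
  have hkerEq : LinearMap.ker σ = LinearMap.ker (R ∘ₗ σ) := by
    apply le_antisymm
    · intro w hw
      rw [LinearMap.mem_ker] at hw ⊢
      rw [LinearMap.comp_apply, hw, map_zero]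
    · intro w hw
      rw [LinearMap.mem_ker] at hw ⊢
      exact hNker w hw
  -- range (R ∘ₗ σ) = range R
  have hrangeEq : LinearMap.range (R ∘ₗ σ) = LinearMap.range R := by
    apply le_antisymm
    · exact LinearMap.range_comp_le_range σ R
    · rw [← hspan, Submodule.span_le]
      rintro x hx
      have hmem : x ∈ LinearMap.range R := by
        rw [← hspan]
        exact Submodule.subset_span hx
      refine ⟨(-m⁻¹) • x, ?_⟩
      rw [LinearMap.comp_apply, map_smul, map_smul, hRσV x hmem]
      rw [smul_neg, smul_smul]
      rw [neg_mul, neg_smul, neg_neg, inv_mul_cancel₀ hm, one_smul]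
  have hrk : Module.finrank ℝ (LinearMap.range (R ∘ₗ σ)) = 2 := by
    rw [hrangeEq, htype]
  have hkerrk : Module.finrank ℝ (LinearMap.ker σ) = 2 := by
    have h1 := LinearMap.finrank_range_add_finrank_ker (R ∘ₗ σ)
    rw [hrk, hdim, hkerEq] at *
    omega
  -- disjointness as submodules
  have hdisj' : Disjoint (LinearMap.range R) (LinearMap.ker σ) := by
    rw [Submodule.disjoint_def]
    intro v hv hk
    exact hdisj v hv (LinearMap.mem_ker.mp hk)
  have hcompl : IsCompl (LinearMap.range R) (LinearMap.ker σ) := by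
    refine ⟨hdisj', ?_⟩
    rw [codisjoint_iff]
    apply Submodule.eq_top_of_finrank_eq
    have h1 := Submodule.finrank_sup_add_finrank_inf_eq (LinearMap.range R) (LinearMap.ker σ)
    rw [hdisj'.eq_bot, finrank_bot, htype, hkerrk] at h1
    rw [hdim]
    omega
  refine ⟨hcompl, hkerrk, ?_, ?_, ?_⟩
  · intro u hu
    rw [LinearMap.mem_ker] at hu ⊢
    have h1 : σ (J u) = J.dualMap (σ u) := by
      simpa [LinearMap.comp_apply] using DFunLike.congr_fun c0c u
    rw [h1, hu, map_zero]
  · intro u hu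
    rw [LinearMap.mem_ker] at hu
    have h1 := hc0a u
    rw [hu, map_zero, add_zero] at h1
    exact h1
  · intro u hu v hv heq
    have h1 : σ (u - v) = 0 := by rw [map_sub, heq, sub_self]
    have h2 : u - v = 0 := hdisj (u - v) (Submodule.sub_mem _ hu hv) h1
    exact sub_eq_zero.mp h2
end

section
/- Let g have dimension 4 and let (J, R, σ) be a generalized complex structure on g of type 1. Then there is a well-defined skew-symmetric nondegenerate bilinear form ω on the subspace Im R determined by ω(Rβ, Rγ) = β(Rγ) for all β, γ in g*, and it satisfies ω(Ju, v) = ω(u, Jv) for all u, v in Im R. -/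
open Module LinearMap

variable {g : Type*} [LieRing g] [LieAlgebra ℝ g]

/-- the skew-symmetric nondegenerate form `ω` on `Im R` with
`ω(Rβ, Rγ) = β(Rγ)` and `ω(Ju, v) = ω(u, Jv)`. -/
theorem gcs_type1_symplectic_on_range [FiniteDimensional ℝ g]
    (hdim : Module.finrank ℝ g = 4)
    (J : g →ₗ[ℝ] g) (R : Module.Dual ℝ g →ₗ[ℝ] g) (σ : g →ₗ[ℝ] Module.Dual ℝ g)
    (h : IsGCS J R σ) (htype : Module.finrank ℝ (LinearMap.range R) = 2) :
    ∃ ω : (LinearMap.range R) →ₗ[ℝ] (LinearMap.range R) →ₗ[ℝ] ℝ,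
      (∀ β γ : Module.Dual ℝ g,
        ω ⟨R β, LinearMap.mem_range_self R β⟩ ⟨R γ, LinearMap.mem_range_self R γ⟩ = β (R γ)) ∧
      (∀ x y : LinearMap.range R, ω x y = -ω y x) ∧
      (∀ x : LinearMap.range R, (∀ y : LinearMap.range R, ω x y = 0) → x = 0) ∧
      (∀ x : LinearMap.range R, J (x : g) ∈ LinearMap.range R) ∧
      (∀ (x y : LinearMap.range R) (hx : J (x : g) ∈ LinearMap.range R)
          (hy : J (y : g) ∈ LinearMap.range R), ω ⟨J (x : g), hx⟩ y = ω x ⟨J (y : g), hy⟩) := by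
  obtain ⟨s, hs⟩ := LinearMap.exists_rightInverse_of_surjective
    (f := R.rangeRestrict) (LinearMap.range_rangeRestrict R)
  have hRs : ∀ x : LinearMap.range R, R (s x) = (x : g) := by
    intro x
    have := congrArg (fun f => ((f x : LinearMap.range R) : g)) hs
    simpa using this
  -- key: s x evaluated at R γ equals -γ x
  have hkey : ∀ (x : LinearMap.range R) (γ : Module.Dual ℝ g),
      (s x) (R γ) = -γ (x : g) := by
    intro x γ
    rw [h.skewR, hRs]
  set ω : (LinearMap.range R) →ₗ[ℝ] (LinearMap.range R) →ₗ[ℝ] ℝ :=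
    LinearMap.mk₂ ℝ (fun x y => (s x) (y : g))
      (by intro x x' y; simp) (by intro c x y; simp)
      (by intro x y y'; simp) (by intro c x y; simp) with hω
  have hωval : ∀ x y : LinearMap.range R, ω x y = (s x) (y : g) := fun x y => rfl
  have hskew : ∀ x y : LinearMap.range R, ω x y = -ω y x := by
    intro x y
    rw [hωval, hωval, ← hRs y, hkey]
  have hJmem : ∀ x : LinearMap.range R, J (x : g) ∈ LinearMap.range R := by
    intro x
    rw [← hRs x, ← LinearMap.comp_apply, h.c0b]
    exact LinearMap.mem_range_self _ _
  refine ⟨ω, ?_, hskew, ?_, hJmem, ?_⟩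
  · intro β γ
    rw [hωval]
    simp only []
    rw [hkey ⟨R β, LinearMap.mem_range_self R β⟩ γ]
    rw [h.skewR γ β]
    ring
  · intro x hx
    have h0 : ∀ γ : Module.Dual ℝ g, γ (x : g) = 0 := by
      intro γ
      have := hx ⟨R γ, LinearMap.mem_range_self R γ⟩
      rw [hωval] at this
      simp only [hkey x γ] at this
      linarith
    exact Subtype.ext ((Module.forall_dual_apply_eq_zero_iff ℝ (x : g)).mp h0)
  · intro x y hx hy
    rw [hωval, hωval]
    have e1 : J (x : g) = R (J.dualMap (s x)) := by
      rw [← hRs x, ← LinearMap.comp_apply, h.c0b, LinearMap.comp_apply]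
    have e2 : J (y : g) = R (J.dualMap (s y)) := by
      rw [← hRs y, ← LinearMap.comp_apply, h.c0b, LinearMap.comp_apply]
    show (s ⟨J (x : g), hx⟩) (y : g) = (s x) (J (y : g))
    rw [← hRs y, hkey ⟨J (x : g), hx⟩ (s y)]
    simp only [e1, e2]
    rw [h.skewR (s y) (J.dualMap (s x)), hRs]
    simp [LinearMap.dualMap_apply]
end

section
/- Let g have dimension 4 and let (J, R, σ) be a generalized complex structure on g of type 1. For every basis (e₁, e₂) of Im R and every nonzero e₃ in ker σ, setting e₄ := J e₃, the family (e₁, e₂, e₃, e₄) is a basis of g, and there exist λ in ℝ and a ≠ 0 such that J e₁ = λ e₁, J e₂ = λ e₂, J e₃ = e₄, J e₄ = -e₃, R(α) = a (α(e₁) e₂ - α(e₂) e₁) for all α in g*, and σ(u)(v) = a⁻¹ (1 + λ²)(e¹(u) e²(v) - e²(u) e¹(v)) for all u, v in g, where (e¹, e², e³, e⁴) denotes the dual basis. -/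
open Module LinearMap

variable {g : Type*} [LieRing g] [LieAlgebra ℝ g]

/-! Skewness forces a rank-two `R : g* → g` with image `span {e₁, e₂}` to be a nonzero multiple
`a • e₁ ∧ e₂`, and `J R = R J*` then makes `J` a scalar `λ` on `span {e₁, e₂}`; evaluating
`J² + R σ = -1` at `e₁` gives `a σ(e₁, e₂) = 1 + λ²`. On `ker σ`, which `J` preserves, `J² = -1`,
so `e₃, J e₃` are independent, while `σ(e₁, e₂) ≠ 0` separates `e₁, e₂` from `ker σ`. A skew
form vanishing on `e₃` and `J e₃` is determined by its value on `(e₁, e₂)`. -/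

section LinearAlgebra

variable {K V : Type*} [Field K] [AddCommGroup V] [Module K V]

theorem LinearIndependent.exists_dual_apply_eq_single {ι : Type*} {v : ι → V}
    (hv : LinearIndependent K v) :
    ∃ f : ι → Dual K V, ∀ i j, f i (v j) = Finsupp.single j 1 i := by
  obtain ⟨g, hg⟩ := (Finsupp.linearCombination K v).exists_leftInverse_of_injective
    (LinearMap.ker_eq_bot.mpr hv)
  refine ⟨fun i => Finsupp.lapply i ∘ₗ g, fun i j => ?_⟩
  have hgv : g (v j) = Finsupp.single j 1 := by
    simpa using LinearMap.congr_fun hg (Finsupp.single j 1)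
  simp [hgv]

theorem LinearIndependent.exists_dual_pair {e₁ e₂ : V} (hind : LinearIndependent K ![e₁, e₂]) :
    ∃ f₁ f₂ : Dual K V, f₁ e₁ = 1 ∧ f₁ e₂ = 0 ∧ f₂ e₁ = 0 ∧ f₂ e₂ = 1 := by
  obtain ⟨f, hf⟩ := hind.exists_dual_apply_eq_single
  exact ⟨f 0, f 1, by simpa using hf 0 0, by simpa using hf 0 1, by simpa using hf 1 0,
    by simpa using hf 1 1⟩

theorem exists_smul_wedge_of_skew [CharZero K] {R : Dual K V →ₗ[K] V}
    (hR : ∀ α β : Dual K V, α (R β) = -β (R α)) {e₁ e₂ : V}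
    (hind : LinearIndependent K ![e₁, e₂]) (hspan : Submodule.span K {e₁, e₂} = range R) :
    ∃ a : K, a ≠ 0 ∧ ∀ α, R α = a • (α e₁ • e₂ - α e₂ • e₁) := by
  obtain ⟨f₁, f₂, h₁₁, h₁₂, h₂₁, h₂₂⟩ := hind.exists_dual_pair
  have hcoord : ∀ α, R α = f₁ (R α) • e₁ + f₂ (R α) • e₂ := fun α => by
    obtain ⟨x, y, hxy⟩ := Submodule.mem_span_pair.mp (hspan ▸ mem_range_self R α)
    simp [← hxy, h₁₁, h₁₂, h₂₁, h₂₂]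
  have hself : ∀ α : Dual K V, α (R α) = 0 := fun α => CharZero.eq_neg_self_iff.mp (hR α α)
  set a := f₂ (R f₁)
  have hR₁ : R f₁ = a • e₂ := by rw [hcoord f₁, hself, zero_smul, zero_add]
  have hR₂ : R f₂ = -a • e₁ := by rw [hcoord f₂, hself, hR, zero_smul, add_zero]
  have hformula : ∀ α, R α = a • (α e₁ • e₂ - α e₂ • e₁) := fun α => by
    rw [hcoord α, hR, hR f₂, hR₁, hR₂]
    simp only [map_smul, smul_eq_mul]
    module
  refine ⟨a, fun ha => hind.ne_zero 0 ?_, hformula⟩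
  obtain ⟨α, hα⟩ : e₁ ∈ range R := hspan ▸ Submodule.subset_span (by simp)
  change e₁ = 0
  rw [← hα, hformula, ha, zero_smul]

theorem exists_eq_smul_of_commute_smul_wedge [CharZero K] {R : Dual K V →ₗ[K] V}
    {J : V →ₗ[K] V} {e₁ e₂ : V} (hind : LinearIndependent K ![e₁, e₂]) {a : K} (ha : a ≠ 0)
    (hR : ∀ α, R α = a • (α e₁ • e₂ - α e₂ • e₁)) (hJR : ∀ α, J (R α) = R (J.dualMap α)) :
    ∃ μ : K, J e₁ = μ • e₁ ∧ J e₂ = μ • e₂ := by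
  have hcomm : ∀ α : Dual K V, α e₁ • J e₂ - α e₂ • J e₁ = α (J e₁) • e₂ - α (J e₂) • e₁ :=
    fun α => smul_right_injective V ha <| by simpa [hR] using hJR α
  obtain ⟨f₁, f₂, h₁₁, h₁₂, h₂₁, h₂₂⟩ := hind.exists_dual_pair
  have hJe₂ : J e₂ = f₁ (J e₁) • e₂ - f₁ (J e₂) • e₁ := by simpa [h₁₁, h₁₂] using hcomm f₁
  have hJe₁ : J e₁ = f₂ (J e₂) • e₁ - f₂ (J e₁) • e₂ := by
    simpa [h₂₁, h₂₂, neg_eq_iff_eq_neg] using hcomm f₂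
  have h₁ : f₁ (J e₂) = 0 :=
    CharZero.eq_neg_self_iff.mp (by simpa [h₁₁, h₁₂] using congrArg f₁ hJe₂)
  have h₂ : f₂ (J e₁) = 0 :=
    CharZero.eq_neg_self_iff.mp (by simpa [h₂₁, h₂₂] using congrArg f₂ hJe₁)
  have hμ : f₂ (J e₂) = f₁ (J e₁) := by simpa [h₁₁, h₁₂, h₂] using (congrArg f₁ hJe₁).symm
  exact ⟨f₁ (J e₁), by simpa [h₂, hμ] using hJe₁, by simpa [h₁] using hJe₂⟩

theorem mul_apply_eq_one_add_sq {R : Dual K V →ₗ[K] V} {J : V →ₗ[K] V}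
    {σ : V →ₗ[K] Dual K V} (hc : ∀ u, J (J u) + R (σ u) = -u) {e₁ e₂ : V} (he₁ : e₁ ≠ 0)
    {a μ : K} (hR : ∀ α, R α = a • (α e₁ • e₂ - α e₂ • e₁)) (hJ : J e₁ = μ • e₁)
    (hσ : σ e₁ e₁ = 0) : a * σ e₁ e₂ = 1 + μ ^ 2 := by
  have h : (μ ^ 2 - a * σ e₁ e₂ + 1) • e₁ = 0 := by
    have := hc e₁
    rw [hJ, map_smul, hJ, hR, hσ] at this
    linear_combination (norm := module) this
  linear_combination -(smul_eq_zero.mp h).resolve_right he₁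

theorem linearIndependent_pair_of_apply_apply_eq_neg [LinearOrder K] [IsStrictOrderedRing K]
    {J : V →ₗ[K] V} {v : V} (hv : v ≠ 0) (hJ : J (J v) = -v) : LinearIndependent K ![v, J v] := by
  refine LinearIndependent.pair_iff.mpr fun s t hst => ?_
  have hJst : s • J v - t • v = 0 := by
    simpa [hJ, sub_eq_add_neg] using congrArg J hst
  have h : (s * s + t * t) • v = 0 := by
    linear_combination (norm := module) s • hst - t • hJst
  exact mul_self_add_mul_self_eq_zero.mp ((smul_eq_zero.mp h).resolve_right hv)

theorem linearIndependent_four_of_skew [CharZero K] {σ : V →ₗ[K] Dual K V}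
    (hσ : ∀ u v, σ u v = -σ v u) {e₁ e₂ e₃ e₄ : V}
    (h₁₂ : σ e₁ e₂ ≠ 0) (h₃ : σ e₃ = 0) (h₄ : σ e₄ = 0)
    (h₃₄ : LinearIndependent K ![e₃, e₄]) : LinearIndependent K ![e₁, e₂, e₃, e₄] := by
  have hdiag : ∀ u, σ u u = 0 := fun u => CharZero.eq_neg_self_iff.mp (hσ u u)
  rw [Fintype.linearIndependent_iff]
  intro c hc
  simp only [Fin.sum_univ_four, Matrix.cons_val] at hc
  have hc₀ : c 0 = 0 := (mul_eq_zero.mp <| by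
    simpa [h₃, h₄, hdiag] using congrArg (σ · e₂) hc).resolve_right h₁₂
  have hc₁ : c 1 = 0 := (mul_eq_zero.mp <| by
    simpa [h₃, h₄, hdiag, hσ e₂ e₁] using congrArg (σ · e₁) hc).resolve_right h₁₂
  obtain ⟨hc₂, hc₃⟩ := LinearIndependent.pair_iff.mp h₃₄ (c 2) (c 3) (by simpa [hc₀, hc₁] using hc)
  intro i
  fin_cases i
  exacts [hc₀, hc₁, hc₂, hc₃]

theorem Module.Basis.apply_apply_eq_of_skew [CharZero K] (B : Basis (Fin 4) K V)
    {σ : V →ₗ[K] Dual K V} (hσ : ∀ u v, σ u v = -σ v u)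
    (h₂ : σ (B 2) = 0) (h₃ : σ (B 3) = 0) (u v : V) :
    σ u v = σ (B 0) (B 1) * (B.coord 0 u * B.coord 1 v - B.coord 1 u * B.coord 0 v) := by
  have hdiag : ∀ u, σ u u = 0 := fun u => CharZero.eq_neg_self_iff.mp (hσ u u)
  suffices σ = σ (B 0) (B 1) • ((B.coord 0).smulRight (B.coord 1) -
      (B.coord 1).smulRight (B.coord 0)) by
    rw [this]; simp
  refine LinearMap.ext_basis B B fun i j => ?_
  fin_cases i <;> fin_cases j <;> simp [h₂, h₃, hdiag, hσ (B 1) (B 0), hσ _ (B 2), hσ _ (B 3)]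

end LinearAlgebra

namespace IsGCS

variable {J : g →ₗ[ℝ] g} {R : Dual ℝ g →ₗ[ℝ] g} {σ : g →ₗ[ℝ] Dual ℝ g}

theorem c0a_apply (h : IsGCS J R σ) (u : g) : J (J u) + R (σ u) = -u := by
  simpa using LinearMap.congr_fun h.c0a u

theorem c0b_apply (h : IsGCS J R σ) (α : Dual ℝ g) : J (R α) = R (J.dualMap α) :=
  LinearMap.congr_fun h.c0b α

theorem c0c_apply (h : IsGCS J R σ) (u : g) : σ (J u) = J.dualMap (σ u) :=
  LinearMap.congr_fun h.c0c u

end IsGCS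

theorem gcs_type1_normal_form_general
    (hdim : Module.finrank ℝ g = 4)
    (J : g →ₗ[ℝ] g) (R : Module.Dual ℝ g →ₗ[ℝ] g) (σ : g →ₗ[ℝ] Module.Dual ℝ g)
    (h : IsGCS J R σ)
    (e₁ e₂ : g) (hind : LinearIndependent ℝ ![e₁, e₂])
    (hspan : Submodule.span ℝ {e₁, e₂} = LinearMap.range R)
    (e₃ : g) (he₃ : σ e₃ = 0) (hne : e₃ ≠ 0) :
    ∃ (B : Basis (Fin 4) ℝ g) (lam a : ℝ), a ≠ 0 ∧
      B 0 = e₁ ∧ B 1 = e₂ ∧ B 2 = e₃ ∧ B 3 = J e₃ ∧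
      J (B 0) = lam • B 0 ∧ J (B 1) = lam • B 1 ∧ J (B 2) = B 3 ∧ J (B 3) = -B 2 ∧
      (∀ α : Module.Dual ℝ g, R α = a • (α (B 0) • B 1 - α (B 1) • B 0)) ∧
      (∀ u v : g, σ u v =
        a⁻¹ * (1 + lam ^ 2) * (B.coord 0 u * B.coord 1 v - B.coord 1 u * B.coord 0 v)) := by
  obtain ⟨a, ha, hR⟩ := exists_smul_wedge_of_skew h.skewR hind hspan
  obtain ⟨lam, hJ₁, hJ₂⟩ := exists_eq_smul_of_commute_smul_wedge hind ha hR h.c0b_apply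
  have hσ₁₂ : σ e₁ e₂ = a⁻¹ * (1 + lam ^ 2) := (eq_inv_mul_iff_mul_eq₀ ha).mpr <|
    mul_apply_eq_one_add_sq h.c0a_apply (hind.ne_zero 0) hR hJ₁
      (CharZero.eq_neg_self_iff.mp (h.skewσ e₁ e₁))
  have hJ₃ : J (J e₃) = -e₃ := by simpa [he₃] using h.c0a_apply e₃
  have hσ₄ : σ (J e₃) = 0 := by rw [h.c0c_apply, he₃, map_zero]
  have hli : LinearIndependent ℝ ![e₁, e₂, e₃, J e₃] :=
    linearIndependent_four_of_skew h.skewσ (by rw [hσ₁₂]; positivity) he₃ hσ₄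
      (linearIndependent_pair_of_apply_apply_eq_neg hne hJ₃)
  let B := basisOfLinearIndependentOfCardEqFinrank hli (by simp [hdim])
  have hB : ⇑B = ![e₁, e₂, e₃, J e₃] := coe_basisOfLinearIndependentOfCardEqFinrank hli _
  refine ⟨B, lam, a, ha, ?_⟩
  have hσB := B.apply_apply_eq_of_skew h.skewσ
  simp only [hB, Matrix.cons_val, true_and] at hσB ⊢
  exact ⟨hJ₁, hJ₂, hJ₃, hR, by simpa [hσ₁₂] using hσB he₃ hσ₄⟩

/-- normal form of a type-1 generalized complex structure in an adapted
basis. -/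
theorem gcs_type1_normal_form [FiniteDimensional ℝ g]
    (hdim : Module.finrank ℝ g = 4)
    (J : g →ₗ[ℝ] g) (R : Module.Dual ℝ g →ₗ[ℝ] g) (σ : g →ₗ[ℝ] Module.Dual ℝ g)
    (h : IsGCS J R σ) (htype : Module.finrank ℝ (LinearMap.range R) = 2)
    (e₁ e₂ : g) (hind : LinearIndependent ℝ ![e₁, e₂])
    (hspan : Submodule.span ℝ {e₁, e₂} = LinearMap.range R)
    (e₃ : g) (he₃ : σ e₃ = 0) (hne : e₃ ≠ 0) :
    ∃ (B : Basis (Fin 4) ℝ g) (lam a : ℝ), a ≠ 0 ∧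
      B 0 = e₁ ∧ B 1 = e₂ ∧ B 2 = e₃ ∧ B 3 = J e₃ ∧
      J (B 0) = lam • B 0 ∧ J (B 1) = lam • B 1 ∧ J (B 2) = B 3 ∧ J (B 3) = -B 2 ∧
      (∀ α : Module.Dual ℝ g, R α = a • (α (B 0) • B 1 - α (B 1) • B 0)) ∧
      (∀ u v : g, σ u v =
        a⁻¹ * (1 + lam ^ 2) * (B.coord 0 u * B.coord 1 v - B.coord 1 u * B.coord 0 v)) :=
  gcs_type1_normal_form_general hdim J R σ h e₁ e₂ hind hspan e₃ he₃ hne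
end

section
/- Let ((J₁, R₁, σ₁), (J₂, R₂, σ₂)) be a generalized Kähler structure on a finite-dimensional real Lie algebra g with R₁ = 0. Then R₂ is bijective. -/
open Module LinearMap

variable {g : Type*} [LieRing g] [LieAlgebra ℝ g]

/-- in a generalized Kähler structure with `R₁ = 0`, the map `R₂` is
bijective. -/
theorem gk_R1_zero_R2_bijective [FiniteDimensional ℝ g]
    (J₁ : g →ₗ[ℝ] g) (R₁ : Module.Dual ℝ g →ₗ[ℝ] g) (σ₁ : g →ₗ[ℝ] Module.Dual ℝ g)
    (J₂ : g →ₗ[ℝ] g) (R₂ : Module.Dual ℝ g →ₗ[ℝ] g) (σ₂ : g →ₗ[ℝ] Module.Dual ℝ g)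
    (h : IsGK J₁ R₁ σ₁ J₂ R₂ σ₂) (hR₁ : R₁ = 0) :
    Function.Bijective R₂ := by
  have hinj : Function.Injective R₂ := by
    rw [← LinearMap.ker_eq_bot, LinearMap.ker_eq_bot']
    intro α hα
    by_contra hne
    have hx : (0, α) ≠ (0 : g × Module.Dual ℝ g) := by
      simp [Prod.ext_iff, hne]
    have := h.posdef (0, α) hx
    rw [show pairing (Kmap J₁ R₁ σ₁ (Kmap J₂ R₂ σ₂ ((0 : g), α))) ((0 : g), α) = 0 from ?_] at this
    · exact lt_irrefl 0 this
    · simp [Kmap, pairing, hR₁, hα]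
  refine ⟨hinj, ?_⟩
  rw [← LinearMap.range_eq_top]
  apply Submodule.eq_top_of_finrank_eq
  rw [LinearMap.finrank_range_of_inj hinj, Subspace.dual_finrank_eq]
end

section
/- Let g be a 4-dimensional real Lie algebra and let ((J₁, R₁, σ₁), (J₂, R₂, σ₂)) be a generalized Kähler structure on g with R₁ ≠ 0 and R₂ ≠ 0. Then either R₁ and R₂ are both bijective, or rank R₁ = rank R₂ = 2 and Im R₁ ∩ Im R₂ = {0}. -/
open Module LinearMap

variable {g : Type*} [LieRing g] [LieAlgebra ℝ g]

/-!
The product `K₁ K₂` of the two generalized complex structures is an involution of `g ⊕ g*` whose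
`±1`-eigenspaces `V±` are graphs over `g` on which the neutral pairing is `±`-definite.
Transporting `K₁` along the projections `V± → g` gives complex structures `I` (from `V₋`) and
`J` (from `V₊`), both orthogonal for the metric `B` that the pairing induces through `V₊`, and
splitting `(0, α)` along `V₊ ⊕ V₋` gives `R₁ = (I - J) E` and `R₂ = (I + J) E` for an isomorphism
`E : g* → g`: this is the bihermitian picture.

For `S = I - J` and `T = I + J` one has `ST = -TS` and `S² + T² = -4`, so `T` is a complex
structure (up to scale) on `ker S` and vice versa, and both kernels are even-dimensional. In
dimension four, if `S` is invertible and `ker T` is a plane, then for `u = T w ≠ 0` the vectors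
`u`, `S u`, `T u` are nonzero, pairwise orthogonal and lie in the plane `range T`, which is absurd.
So either both are invertible or both kernels are planes; in the latter case the kernels meet
trivially, hence span `g`, and the ranges, being their orthogonal complements, meet trivially.
-/

section SkewAdjoint

variable {M : Type*} [AddCommGroup M] [Module ℝ M]

theorem even_finrank_of_mul_self_eq_neg_smul [FiniteDimensional ℝ M] (f : Module.End ℝ M)
    {c : ℝ} (hc : 0 < c) (hf : f * f = -(c • 1)) : Even (finrank ℝ M) := by
  have hdet : LinearMap.det f * LinearMap.det f = (-c) ^ finrank ℝ M := by
    rw [← map_mul, hf, ← neg_smul, LinearMap.det_smul, map_one, mul_one]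
  by_contra hodd
  have := (Nat.not_even_iff_odd.mp hodd).pow_neg (neg_neg_of_pos hc)
  nlinarith [mul_self_nonneg (LinearMap.det f)]

theorem even_finrank_ker_of_anticommute [FiniteDimensional ℝ M] {S T : Module.End ℝ M} {c : ℝ}
    (hc : 0 < c) (hST : S * T = -(T * S)) (hsq : S * S + T * T = -(c • 1)) :
    Even (finrank ℝ (ker S)) := by
  have hT : Set.MapsTo T (ker S) (ker S) := fun x hx ↦ by
    have := LinearMap.congr_fun hST x
    simp only [SetLike.mem_coe, mem_ker] at hx ⊢
    simpa [hx] using this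
  refine even_finrank_of_mul_self_eq_neg_smul (T.restrict hT) hc ?_
  ext ⟨x, hx⟩
  have := LinearMap.congr_fun hsq x
  simp only [Module.End.mul_apply, LinearMap.add_apply, mem_ker.mp hx, map_zero, zero_add] at this
  exact this

theorem disjoint_ker_of_mul_self_add_mul_self {S T : Module.End ℝ M} {c : ℝ} (hc : c ≠ 0)
    (hsq : S * S + T * T = -(c • 1)) : Disjoint (ker S) (ker T) := by
  rw [Submodule.disjoint_def]
  intro x hS hT
  rw [mem_ker] at hS hT
  have := LinearMap.congr_fun hsq x
  simp only [LinearMap.add_apply, Module.End.mul_apply, hS, hT, map_zero, add_zero,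
    LinearMap.neg_apply, LinearMap.smul_apply, Module.End.one_apply] at this
  exact (smul_eq_zero.mp (neg_eq_zero.mp this.symm)).resolve_left hc

variable {B : LinearMap.BilinForm ℝ M}

theorem apply_self_eq_zero_of_isSkewAdjoint (hB : B.IsSymm) {S : Module.End ℝ M}
    (hS : B.IsSkewAdjoint S) (u : M) : B (S u) u = 0 := by
  have h := hS u u
  rw [Pi.neg_apply, LinearMap.map_neg, hB.eq u] at h
  linarith

theorem apply_apply_eq_zero_of_anticommute (hB : B.IsSymm) {S T : Module.End ℝ M}
    (hS : B.IsSkewAdjoint S) (hT : B.IsSkewAdjoint T) (hST : S * T = -(T * S)) (u : M) :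
    B (S u) (T u) = 0 := by
  have h1 := hS u (T u)
  have h2 := hT u (S u)
  rw [Pi.neg_apply, ← Module.End.mul_apply, hST, LinearMap.neg_apply, neg_neg,
    Module.End.mul_apply] at h1
  rw [Pi.neg_apply, map_neg, ← h1, hB.eq (T u)] at h2
  linarith

theorem three_le_finrank_range_of_anticommute [FiniteDimensional ℝ M] (hB : B.IsSymm)
    (hBpos : ∀ u, u ≠ 0 → 0 < B u u) {S T : Module.End ℝ M}
    (hS : B.IsSkewAdjoint S) (hT : B.IsSkewAdjoint T) (hST : S * T = -(T * S))
    (hSinj : Function.Injective S) (hT0 : T ≠ 0) : 3 ≤ finrank ℝ (range T) := by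
  obtain ⟨w, hw⟩ : ∃ w, T w ≠ 0 := by
    by_contra! h
    exact hT0 (LinearMap.ext h)
  set u := T w
  have hTu : T u ≠ 0 := by
    intro h0
    have := hT w u
    rw [Pi.neg_apply, h0, neg_zero, map_zero] at this
    exact (hBpos u hw).ne' this
  have hSu : S u ≠ 0 := fun h0 ↦ hw (hSinj (h0.trans (map_zero S).symm))
  have hSTu := apply_apply_eq_zero_of_anticommute hB hS hT hST u
  have hSuu := apply_self_eq_zero_of_isSkewAdjoint hB hS u
  have hTuu := apply_self_eq_zero_of_isSkewAdjoint hB hT u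
  have huSu : B u (S u) = 0 := hB.eq u (S u) ▸ hSuu
  have huTu : B u (T u) = 0 := hB.eq u (T u) ▸ hTuu
  have hTSu : B (T u) (S u) = 0 := hB.eq (S u) (T u) ▸ hSTu
  let v : Fin 3 → M := ![u, S u, T u]
  have hortho : B.iIsOrtho v := by
    intro i j hij
    fin_cases i <;> fin_cases j <;> first | exact (hij rfl).elim | assumption
  have hli : LinearIndependent ℝ v :=
    LinearMap.BilinForm.linearIndependent_of_iIsOrtho hortho fun i ↦ by
      fin_cases i <;> simp [v, (hBpos _ hw).ne', (hBpos _ hSu).ne', (hBpos _ hTu).ne']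
  have hspan : Submodule.span ℝ (Set.range v) ≤ range T := by
    rw [Submodule.span_le, Set.range_subset_iff]
    intro i
    fin_cases i
    · exact mem_range_self T w
    · exact ⟨-S w, by simpa [v, u] using (LinearMap.congr_fun hST w).symm⟩
    · exact mem_range_self T u
  simpa [finrank_span_eq_card hli] using Submodule.finrank_mono hspan

theorem range_inf_range_eq_bot_of_ker_sup_ker_eq_top (hBpos : ∀ u, u ≠ 0 → 0 < B u u)
    {S T : Module.End ℝ M} (hS : B.IsSkewAdjoint S) (hT : B.IsSkewAdjoint T)
    (hker : ker S ⊔ ker T = ⊤) : range S ⊓ range T = ⊥ := by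
  rw [eq_bot_iff]
  rintro v ⟨⟨a, rfl⟩, ⟨b, hb⟩⟩
  obtain ⟨k, hk, l, hl, hkl⟩ := Submodule.mem_sup.mp (hker ▸ Submodule.mem_top (x := S a))
  have hzero : B (S a) (S a) = 0 := by
    have h1 := hS a k
    have h2 := hT b l
    rw [Pi.neg_apply, mem_ker.mp hk, neg_zero, map_zero] at h1
    rw [Pi.neg_apply, mem_ker.mp hl, neg_zero, map_zero] at h2
    nth_rewrite 2 [← hkl]
    rw [map_add, h1, ← hb, h2, add_zero]
  by_contra h0
  exact (hBpos _ h0).ne' hzero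

theorem finrank_ker_eq_zero_or_two [FiniteDimensional ℝ M] (hM : finrank ℝ M = 4)
    {S : Module.End ℝ M} (heven : Even (finrank ℝ (ker S))) (hS : S ≠ 0) :
    finrank ℝ (ker S) = 0 ∨ finrank ℝ (ker S) = 2 := by
  have hle : finrank ℝ (ker S) ≤ 4 := hM ▸ Submodule.finrank_le _
  have hne : finrank ℝ (ker S) ≠ 4 := fun h4 ↦
    hS (ker_eq_top.mp (Submodule.eq_top_of_finrank_eq (h4.trans hM.symm)))
  obtain ⟨r, hr⟩ := heven
  omega

theorem injective_of_finrank_ker_eq_zero [FiniteDimensional ℝ M] {S : Module.End ℝ M}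
    (h : finrank ℝ (ker S) = 0) : Function.Injective S :=
  ker_eq_bot.mp (Submodule.finrank_eq_zero.mp h)

theorem bijective_or_finrank_range_eq_two [FiniteDimensional ℝ M] (hM : finrank ℝ M = 4)
    (hB : B.IsSymm) (hBpos : ∀ u, u ≠ 0 → 0 < B u u) {I J : Module.End ℝ M} (hI : I * I = -1)
    (hJ : J * J = -1) (hIskew : B.IsSkewAdjoint I) (hJskew : B.IsSkewAdjoint J)
    (hsub : I - J ≠ 0) (hadd : I + J ≠ 0) :
    (Function.Bijective (I - J) ∧ Function.Bijective (I + J)) ∨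
      (finrank ℝ (range (I - J)) = 2 ∧ finrank ℝ (range (I + J)) = 2 ∧
        range (I - J) ⊓ range (I + J) = ⊥) := by
  have hS : B.IsSkewAdjoint (I - J) := (mem_skewAdjointSubmodule _).mp <|
    sub_mem ((mem_skewAdjointSubmodule _).mpr hIskew) ((mem_skewAdjointSubmodule _).mpr hJskew)
  have hT : B.IsSkewAdjoint (I + J) := (mem_skewAdjointSubmodule _).mp <|
    add_mem ((mem_skewAdjointSubmodule _).mpr hIskew) ((mem_skewAdjointSubmodule _).mpr hJskew)
  have hST : (I - J) * (I + J) = -((I + J) * (I - J)) := by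
    simp only [mul_add, mul_sub, add_mul, sub_mul, hI, hJ]; abel
  have hsq : (I - J) * (I - J) + (I + J) * (I + J) = -((4 : ℝ) • 1) := by
    simp only [mul_add, mul_sub, add_mul, sub_mul, hI, hJ]; module
  have hkerS :=
    finrank_ker_eq_zero_or_two hM (even_finrank_ker_of_anticommute four_pos hST hsq) hsub
  have hkerT := finrank_ker_eq_zero_or_two hM (even_finrank_ker_of_anticommute four_pos
    (neg_eq_iff_eq_neg.mp hST.symm) ((add_comm _ _).trans hsq)) hadd
  have hrkS := LinearMap.finrank_range_add_finrank_ker (I - J)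
  have hrkT := LinearMap.finrank_range_add_finrank_ker (I + J)
  rcases hkerS with hkerS | hkerS <;> rcases hkerT with hkerT | hkerT
  · have hSinj := injective_of_finrank_ker_eq_zero hkerS
    have hTinj := injective_of_finrank_ker_eq_zero hkerT
    exact .inl ⟨⟨hSinj, injective_iff_surjective.mp hSinj⟩,
      ⟨hTinj, injective_iff_surjective.mp hTinj⟩⟩
  · have := three_le_finrank_range_of_anticommute hB hBpos hS hT hST
      (injective_of_finrank_ker_eq_zero hkerS) hadd
    omega
  · have := three_le_finrank_range_of_anticommute hB hBpos hT hS
      (neg_eq_iff_eq_neg.mp hST.symm) (injective_of_finrank_ker_eq_zero hkerT) hsub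
    omega
  · refine .inr ⟨by omega, by omega, range_inf_range_eq_bot_of_ker_sup_ker_eq_top hBpos hS hT ?_⟩
    have hdisj := disjoint_ker_of_mul_self_add_mul_self four_ne_zero hsq
    have hdim := Submodule.finrank_sup_add_finrank_inf_eq (ker (I - J)) (ker (I + J))
    rw [hdisj.eq_bot, finrank_bot] at hdim
    exact Submodule.eq_top_of_finrank_eq (by omega)

end SkewAdjoint

section Involution

variable {V : Type*} [AddCommGroup V] [Module ℝ V] {f : Module.End ℝ V}

theorem half_add_mem_eigenspace_one (hf : f * f = 1) (x : V) :
    (2⁻¹ : ℝ) • (x + f x) ∈ f.eigenspace 1 := by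
  rw [Module.End.mem_eigenspace_iff, map_smul, map_add, ← Module.End.mul_apply, hf,
    Module.End.one_apply, one_smul, add_comm]

theorem half_sub_mem_eigenspace_neg_one (hf : f * f = 1) (x : V) :
    (2⁻¹ : ℝ) • (x - f x) ∈ f.eigenspace (-1) := by
  rw [Module.End.mem_eigenspace_iff, map_smul, map_sub, ← Module.End.mul_apply, hf,
    Module.End.one_apply]
  module

theorem isCompl_eigenspace_one_neg_one (hf : f * f = 1) :
    IsCompl (f.eigenspace 1) (f.eigenspace (-1)) := by
  refine ⟨f.disjoint_genEigenspace (by norm_num) 1 1, codisjoint_iff.mpr ?_⟩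
  refine Submodule.eq_top_iff'.mpr fun x ↦ ?_
  have hx : x = (2⁻¹ : ℝ) • (x + f x) + (2⁻¹ : ℝ) • (x - f x) := by module
  rw [hx]
  exact Submodule.add_mem_sup (half_add_mem_eigenspace_one hf x)
    (half_sub_mem_eigenspace_neg_one hf x)

end Involution

noncomputable def pairingForm : LinearMap.BilinForm ℝ (g × Dual ℝ g) :=
  LinearMap.mk₂ ℝ pairing
    (fun _ _ _ ↦ by
      simp only [pairing, Prod.fst_add, Prod.snd_add, map_add, LinearMap.add_apply]; ring)
    (fun _ _ _ ↦ by
      simp only [pairing, Prod.smul_fst, Prod.smul_snd, map_smul, LinearMap.smul_apply,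
        smul_eq_mul]; ring)
    (fun _ _ _ ↦ by
      simp only [pairing, Prod.fst_add, Prod.snd_add, map_add, LinearMap.add_apply]; ring)
    (fun _ _ _ ↦ by
      simp only [pairing, Prod.smul_fst, Prod.smul_snd, map_smul, LinearMap.smul_apply,
        smul_eq_mul]; ring)

theorem pairingForm_apply (x y : g × Dual ℝ g) :
    pairingForm x y = (x.2 y.1 + y.2 x.1) / 2 := rfl

theorem pairingForm_isSymm : (pairingForm (g := g)).IsSymm :=
  ⟨fun x y ↦ by simp only [pairingForm_apply]; ring⟩

theorem pairingForm_eq_zero_of_fst_eq_zero {x y : g × Dual ℝ g} (hx : x.1 = 0) (hy : y.1 = 0) :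
    pairingForm x y = 0 := by
  simp [pairingForm_apply, hx, hy]

noncomputable def Kmapₗ (J : g →ₗ[ℝ] g) (R : Dual ℝ g →ₗ[ℝ] g) (σ : g →ₗ[ℝ] Dual ℝ g) :
    Module.End ℝ (g × Dual ℝ g) :=
  (J ∘ₗ LinearMap.fst ℝ g (Dual ℝ g) + R ∘ₗ LinearMap.snd ℝ g (Dual ℝ g)).prod
    (σ ∘ₗ LinearMap.fst ℝ g (Dual ℝ g) - J.dualMap ∘ₗ LinearMap.snd ℝ g (Dual ℝ g))

@[simp]
theorem Kmapₗ_apply (J : g →ₗ[ℝ] g) (R : Dual ℝ g →ₗ[ℝ] g) (σ : g →ₗ[ℝ] Dual ℝ g)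
    (x : g × Dual ℝ g) : Kmapₗ J R σ x = Kmap J R σ x := rfl

namespace IsGCS

variable {J : g →ₗ[ℝ] g} {R : Dual ℝ g →ₗ[ℝ] g} {σ : g →ₗ[ℝ] Dual ℝ g}

theorem Kmapₗ_mul_self (hg : IsGCS J R σ) : Kmapₗ J R σ * Kmapₗ J R σ = -1 := by
  have hJJ (u : g) : J (J u) + R (σ u) = -u := LinearMap.congr_fun hg.c0a u
  have hJR (β : Dual ℝ g) : J (R β) = R (J.dualMap β) := LinearMap.congr_fun hg.c0b β
  have hσJ (u : g) : σ (J u) = J.dualMap (σ u) := LinearMap.congr_fun hg.c0c u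
  have hσR (β : Dual ℝ g) : σ (R β) + J.dualMap (J.dualMap β) = -β := by
    ext v
    have := congr(β $(hJJ v))
    simp only [map_add, map_neg] at this
    simp only [LinearMap.add_apply, LinearMap.neg_apply, LinearMap.dualMap_apply,
      hg.skewσ (R β) v, hg.skewR (σ v) β]
    linarith
  refine LinearMap.ext fun ⟨u, α⟩ ↦ ?_
  simp only [Module.End.mul_apply, Kmapₗ_apply, Kmap, map_add, map_sub, hJR, hσJ,
    LinearMap.neg_apply, Module.End.one_apply, Prod.neg_mk, Prod.mk.injEq]
  constructor
  · linear_combination (norm := abel) hJJ u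
  · linear_combination (norm := abel) hσR α

theorem isSkewAdjoint_Kmapₗ (hg : IsGCS J R σ) : pairingForm.IsSkewAdjoint (Kmapₗ J R σ) := by
  rintro ⟨u, α⟩ ⟨v, β⟩
  simp only [Pi.neg_apply, map_neg, pairingForm_apply, Kmapₗ_apply, Kmap, LinearMap.sub_apply,
    LinearMap.dualMap_apply, map_add, hg.skewσ u v, hg.skewR β α]
  ring

end IsGCS

theorem Kmapₗ_inr_fst (J : g →ₗ[ℝ] g) (R : Dual ℝ g →ₗ[ℝ] g) (σ : g →ₗ[ℝ] Dual ℝ g)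
    (α : Dual ℝ g) : (Kmapₗ J R σ (0, α)).1 = R α := by
  simp [Kmap]

structure IsGKPair (K₁ K₂ : Module.End ℝ (g × Dual ℝ g)) : Prop where
  mul_self₁ : K₁ * K₁ = -1
  mul_self₂ : K₂ * K₂ = -1
  isSkewAdjoint₁ : pairingForm.IsSkewAdjoint K₁
  commute : Commute K₁ K₂
  symm : ∀ x y, pairingForm (K₁ (K₂ x)) y = pairingForm (K₁ (K₂ y)) x
  pos : ∀ x, x ≠ 0 → 0 < pairingForm (K₁ (K₂ x)) x

theorem IsGK.isGKPair {J₁ : g →ₗ[ℝ] g} {R₁ : Dual ℝ g →ₗ[ℝ] g} {σ₁ : g →ₗ[ℝ] Dual ℝ g}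
    {J₂ : g →ₗ[ℝ] g} {R₂ : Dual ℝ g →ₗ[ℝ] g} {σ₂ : g →ₗ[ℝ] Dual ℝ g}
    (h : IsGK J₁ R₁ σ₁ J₂ R₂ σ₂) : IsGKPair (Kmapₗ J₁ R₁ σ₁) (Kmapₗ J₂ R₂ σ₂) where
  mul_self₁ := h.gcs₁.Kmapₗ_mul_self
  mul_self₂ := h.gcs₂.Kmapₗ_mul_self
  isSkewAdjoint₁ := h.gcs₁.isSkewAdjoint_Kmapₗ
  commute := LinearMap.ext h.comm
  symm := h.symm
  pos := h.posdef

/-- `(2⁻¹ : ℝ) • (1 - K₁ * K₂)` is the projection onto the `-1`-eigenspace of `K₁ * K₂`. -/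
noncomputable def fstNegPart (K₁ K₂ : Module.End ℝ (g × Dual ℝ g)) : Dual ℝ g →ₗ[ℝ] g :=
  LinearMap.fst ℝ g (Dual ℝ g) ∘ₗ ((2⁻¹ : ℝ) • (1 - K₁ * K₂)) ∘ₗ LinearMap.inr ℝ g (Dual ℝ g)

namespace IsGKPair

variable {K₁ K₂ : Module.End ℝ (g × Dual ℝ g)} (hK : IsGKPair K₁ K₂)
include hK

theorem mul_mul_self : K₁ * K₂ * (K₁ * K₂) = 1 := by
  rw [hK.commute.symm.mul_mul_mul_comm, hK.mul_self₁, hK.mul_self₂]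
  ext <;> simp

theorem K₂_apply_of_mem_eigenspace {μ : ℝ} {x : g × Dual ℝ g}
    (hx : x ∈ (K₁ * K₂).eigenspace μ) : K₂ x = -(μ • K₁ x) := by
  rw [Module.End.mem_eigenspace_iff, Module.End.mul_apply] at hx
  rw [← map_smul, ← hx, ← Module.End.mul_apply K₁, hK.mul_self₁, LinearMap.neg_apply,
    Module.End.one_apply, neg_neg]

theorem mul_pairingForm_self_pos {μ : ℝ} {x : g × Dual ℝ g}
    (hx : x ∈ (K₁ * K₂).eigenspace μ) (h0 : x ≠ 0) : 0 < μ * pairingForm x x := by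
  have := hK.pos x h0
  rwa [← Module.End.mul_apply, Module.End.mem_eigenspace_iff.mp hx, map_smul,
    LinearMap.smul_apply, smul_eq_mul] at this

theorem injective_fst_comp_subtype (μ : ℝ) :
    Function.Injective (LinearMap.fst ℝ g (Dual ℝ g) ∘ₗ ((K₁ * K₂).eigenspace μ).subtype) := by
  rw [injective_iff_map_eq_zero]
  rintro ⟨x, hx⟩ hx0
  by_contra h0
  have hpos := hK.mul_pairingForm_self_pos hx (by simpa using h0)
  replace hx0 : x.1 = 0 := hx0
  rw [pairingForm_eq_zero_of_fst_eq_zero hx0 hx0, mul_zero] at hpos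
  exact hpos.false

theorem pairingForm_eq_zero_of_mem_eigenspace {x y : g × Dual ℝ g}
    (hx : x ∈ (K₁ * K₂).eigenspace 1) (hy : y ∈ (K₁ * K₂).eigenspace (-1)) :
    pairingForm x y = 0 := by
  have := hK.symm x y
  rw [← Module.End.mul_apply, Module.End.mem_eigenspace_iff.mp hx, ← Module.End.mul_apply,
    Module.End.mem_eigenspace_iff.mp hy, one_smul, neg_one_smul, map_neg, LinearMap.neg_apply,
    pairingForm_isSymm.eq y x] at this
  linarith

theorem K₁_mem_eigenspace {μ : ℝ} {x : g × Dual ℝ g} (hx : x ∈ (K₁ * K₂).eigenspace μ) :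
    K₁ x ∈ (K₁ * K₂).eigenspace μ :=
  Module.End.mapsTo_genEigenspace_of_comm ((Commute.refl K₁).mul_left hK.commute.symm) μ 1 hx

theorem section_fst_eq {μ : ℝ} {L : g →ₗ[ℝ] g × Dual ℝ g}
    (hL : ∀ u, L u ∈ (K₁ * K₂).eigenspace μ ∧ (L u).1 = u) {x : g × Dual ℝ g}
    (hx : x ∈ (K₁ * K₂).eigenspace μ) : L x.1 = x :=
  congrArg Subtype.val <| hK.injective_fst_comp_subtype μ
    (a₁ := ⟨L x.1, (hL x.1).1⟩) (a₂ := ⟨x, hx⟩) (hL x.1).2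

theorem pairingForm_section_neg {Lpos Lneg : g →ₗ[ℝ] g × Dual ℝ g}
    (hLpos : ∀ u, Lpos u ∈ (K₁ * K₂).eigenspace 1 ∧ (Lpos u).1 = u)
    (hLneg : ∀ u, Lneg u ∈ (K₁ * K₂).eigenspace (-1) ∧ (Lneg u).1 = u) (u v : g) :
    pairingForm (Lneg u) (Lneg v) = -pairingForm (Lpos u) (Lpos v) := by
  have h0 : pairingForm (Lpos u - Lneg u) (Lpos v - Lneg v) = 0 :=
    pairingForm_eq_zero_of_fst_eq_zero (by simp [(hLpos u).2, (hLneg u).2])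
      (by simp [(hLpos v).2, (hLneg v).2])
  have hpm := hK.pairingForm_eq_zero_of_mem_eigenspace (hLpos u).1 (hLneg v).1
  have hmp := hK.pairingForm_eq_zero_of_mem_eigenspace (hLpos v).1 (hLneg u).1
  rw [pairingForm_isSymm.eq] at hmp
  simp only [map_sub, LinearMap.sub_apply, hpm, hmp] at h0
  linarith

theorem fst_apply_inr_eq {I J : Module.End ℝ g}
    (hI : ∀ x ∈ (K₁ * K₂).eigenspace (-1), (K₁ x).1 = I x.1)
    (hJ : ∀ x ∈ (K₁ * K₂).eigenspace 1, (K₁ x).1 = J x.1) (α : Dual ℝ g) :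
    (K₁ (0, α)).1 = (I - J) (fstNegPart K₁ K₂ α) ∧
      (K₂ (0, α)).1 = (I + J) (fstNegPart K₁ K₂ α) := by
  set x : g × Dual ℝ g := (0, α)
  have hp := half_add_mem_eigenspace_one hK.mul_mul_self x
  have hm := half_sub_mem_eigenspace_neg_one hK.mul_mul_self x
  have hx : x = (2⁻¹ : ℝ) • (x + (K₁ * K₂) x) + (2⁻¹ : ℝ) • (x - (K₁ * K₂) x) := by module
  have hpfst : ((2⁻¹ : ℝ) • (x + (K₁ * K₂) x)).1 = -fstNegPart K₁ K₂ α := by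
    simp [fstNegPart, x]
  have hmfst : ((2⁻¹ : ℝ) • (x - (K₁ * K₂) x)).1 = fstNegPart K₁ K₂ α := by
    simp [fstNegPart, x]
  constructor
  · rw [hx, map_add, Prod.fst_add, hJ _ hp, hI _ hm, hpfst, hmfst, map_neg]
    simp only [LinearMap.sub_apply]; abel
  · rw [hx, map_add, Prod.fst_add, hK.K₂_apply_of_mem_eigenspace hp,
      hK.K₂_apply_of_mem_eigenspace hm, Prod.fst_neg, Prod.fst_neg, Prod.smul_fst,
      Prod.smul_fst, hJ _ hp, hI _ hm, hpfst, hmfst]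
    simp only [LinearMap.add_apply, map_neg]; module

variable [FiniteDimensional ℝ g]

theorem finrank_eigenspace {μ : ℝ} (hμ : μ = 1 ∨ μ = -1) :
    finrank ℝ ((K₁ * K₂).eigenspace μ) = finrank ℝ g := by
  have hle (ν : ℝ) : finrank ℝ ((K₁ * K₂).eigenspace ν) ≤ finrank ℝ g :=
    LinearMap.finrank_le_finrank_of_injective (hK.injective_fst_comp_subtype ν)
  have hsum := Submodule.finrank_add_eq_of_isCompl (isCompl_eigenspace_one_neg_one hK.mul_mul_self)
  rw [Module.finrank_prod, Subspace.dual_finrank_eq] at hsum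
  have := hle 1
  have := hle (-1)
  rcases hμ with rfl | rfl <;> omega

theorem exists_section_fst {μ : ℝ} (hμ : μ = 1 ∨ μ = -1) :
    ∃ L : g →ₗ[ℝ] g × Dual ℝ g, ∀ u, L u ∈ (K₁ * K₂).eigenspace μ ∧ (L u).1 = u := by
  let e := LinearMap.linearEquivOfInjective (V := (K₁ * K₂).eigenspace μ) _
    (hK.injective_fst_comp_subtype μ) (hK.finrank_eigenspace hμ)
  exact ⟨Submodule.subtype _ ∘ₗ e.symm.toLinearMap, fun u ↦ ⟨(e.symm u).2, e.apply_symm_apply u⟩⟩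

theorem exists_complexStructure {μ : ℝ} (hμ : μ = 1 ∨ μ = -1) :
    ∃ (L : g →ₗ[ℝ] g × Dual ℝ g) (I : Module.End ℝ g),
      (∀ u, L u ∈ (K₁ * K₂).eigenspace μ ∧ (L u).1 = u) ∧ I * I = -1 ∧
      (pairingForm.compl₁₂ L L).IsSkewAdjoint I ∧
      ∀ x ∈ (K₁ * K₂).eigenspace μ, (K₁ x).1 = I x.1 := by
  obtain ⟨L, hL⟩ := hK.exists_section_fst hμ
  let I := LinearMap.fst ℝ g (Dual ℝ g) ∘ₗ K₁ ∘ₗ L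
  have hLI (u : g) : L (I u) = K₁ (L u) := hK.section_fst_eq hL (hK.K₁_mem_eigenspace (hL u).1)
  refine ⟨L, I, hL, ?_, fun u v ↦ ?_, fun x hx ↦ ?_⟩
  · ext u
    show (K₁ (L (I u))).1 = -u
    rw [hLI, ← Module.End.mul_apply, hK.mul_self₁]
    simp [(hL u).2]
  · have := hK.isSkewAdjoint₁ (L u) (L v)
    rw [Pi.neg_apply, map_neg] at this
    simpa only [compl₁₂_apply, Pi.neg_apply, map_neg, hLI] using this
  · show (K₁ x).1 = (K₁ (L x.1)).1
    rw [hK.section_fst_eq hL hx]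

theorem bijective_fstNegPart : Function.Bijective (fstNegPart K₁ K₂) := by
  have hinj : Function.Injective (fstNegPart K₁ K₂) := by
    rw [injective_iff_map_eq_zero]
    intro α hα
    by_contra h0
    have hpos := hK.pos (0, α) (by simpa using h0)
    have : α (fstNegPart K₁ K₂ α) = -pairingForm (K₁ (K₂ (0, α))) (0, α) := by
      simp [fstNegPart, pairingForm_apply]; ring
    rw [hα, map_zero] at this
    linarith
  exact ⟨hinj, (LinearMap.injective_iff_surjective_of_finrank_eq_finrank
    Subspace.dual_finrank_eq).mp hinj⟩

theorem exists_bihermitian :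
    ∃ (B : LinearMap.BilinForm ℝ g) (I J : Module.End ℝ g) (E : Dual ℝ g →ₗ[ℝ] g),
      B.IsSymm ∧ (∀ u, u ≠ 0 → 0 < B u u) ∧ I * I = -1 ∧ J * J = -1 ∧
      B.IsSkewAdjoint I ∧ B.IsSkewAdjoint J ∧ Function.Bijective E ∧
      ∀ α, (K₁ (0, α)).1 = (I - J) (E α) ∧ (K₂ (0, α)).1 = (I + J) (E α) := by
  obtain ⟨Lneg, I, hLneg, hI, hIskew, hIfst⟩ := hK.exists_complexStructure (μ := -1) (.inr rfl)
  obtain ⟨Lpos, J, hLpos, hJ, hJskew, hJfst⟩ := hK.exists_complexStructure (μ := 1) (.inl rfl)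
  refine ⟨pairingForm.compl₁₂ Lpos Lpos, I, J, fstNegPart K₁ K₂,
    ⟨fun u v ↦ pairingForm_isSymm.eq _ _⟩, fun u hu ↦ ?_, hI, hJ, fun u v ↦ ?_, hJskew,
    hK.bijective_fstNegPart, hK.fst_apply_inr_eq hIfst hJfst⟩
  · have hLu : Lpos u ≠ 0 := fun h ↦ hu (by rw [← (hLpos u).2, h]; rfl)
    simpa using hK.mul_pairingForm_self_pos (hLpos u).1 hLu
  · have := hIskew u v
    simp only [compl₁₂_apply, Pi.neg_apply, hK.pairingForm_section_neg hLpos hLneg] at this ⊢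
    linarith

end IsGKPair

/-- type restrictions for a generalized Kähler structure in dimension 4. -/
theorem gk_type_restriction [FiniteDimensional ℝ g]
    (hdim : Module.finrank ℝ g = 4)
    (J₁ : g →ₗ[ℝ] g) (R₁ : Module.Dual ℝ g →ₗ[ℝ] g) (σ₁ : g →ₗ[ℝ] Module.Dual ℝ g)
    (J₂ : g →ₗ[ℝ] g) (R₂ : Module.Dual ℝ g →ₗ[ℝ] g) (σ₂ : g →ₗ[ℝ] Module.Dual ℝ g)
    (h : IsGK J₁ R₁ σ₁ J₂ R₂ σ₂) (hR₁ : R₁ ≠ 0) (hR₂ : R₂ ≠ 0) :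
    (Function.Bijective R₁ ∧ Function.Bijective R₂) ∨
    (Module.finrank ℝ (LinearMap.range R₁) = 2 ∧
      Module.finrank ℝ (LinearMap.range R₂) = 2 ∧
      LinearMap.range R₁ ⊓ LinearMap.range R₂ = ⊥) := by
  obtain ⟨B, I, J, E, hB, hBpos, hI, hJ, hIskew, hJskew, hE, hRE⟩ :=
    h.isGKPair.exists_bihermitian
  have hR₁E : R₁ = (I - J) ∘ₗ E := LinearMap.ext fun α ↦ by
    rw [← Kmapₗ_inr_fst J₁ R₁ σ₁, (hRE α).1, LinearMap.comp_apply]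
  have hR₂E : R₂ = (I + J) ∘ₗ E := LinearMap.ext fun α ↦ by
    rw [← Kmapₗ_inr_fst J₂ R₂ σ₂, (hRE α).2, LinearMap.comp_apply]
  have hErange : LinearMap.range E = ⊤ := LinearMap.range_eq_top.mpr hE.2
  subst hR₁E hR₂E
  rw [LinearMap.range_comp_of_range_eq_top _ hErange,
    LinearMap.range_comp_of_range_eq_top _ hErange]
  refine (bijective_or_finrank_range_eq_two hdim hB hBpos hI hJ hIskew hJskew
    (fun h0 ↦ hR₁ (by rw [h0, zero_comp])) (fun h0 ↦ hR₂ (by rw [h0, zero_comp]))).imp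
    (fun ⟨h₁, h₂⟩ ↦ ⟨h₁.comp hE, h₂.comp hE⟩) id
end
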